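/- arXiv:2104.11825 — 10 statements merged into one kernel-verified Lean document; each statement's English description precedes it below -/
import Mathlib

section
/- Let S : [0,1) → [0,1) be an interval translation map. Then S admits an invariant Borel probability measure, i.e., there exists a Borel probability measure μ on [0,1) such that μ(S⁻¹(A)) = μ(A) for every Borel set A. -/
/-!
Average the push-forwards of Lebesgue measure on `[0, 1)` under the first `m` iterates of `S` and
take an ultrafilter limit `J` of their distribution functions `b ↦ μₘ (Iio b)`. As `S` is a
piecewise translation, invariance of a measure is a finite functional equation for its
distribution function (`IsInvariantCDF`); the averages satisfy it up to `O(1/m)`, so `J` satisfies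
it exactly. If `J` is left-continuous at the partition points, its left-continuous
regularisation `leftLim J` satisfies the equation as well and is the distribution function of an
invariant Stieltjes measure.
Otherwise the left jumps of `J` can only grow along orbits of the right-closed version of `S`;
since `J` has finitely many jumps of a given size, such an orbit is periodic, and shifting it
slightly to the left gives a periodic orbit of `S`, whose uniform measure is invariant.
-/

open MeasureTheory Set Filter Topology Function
open scoped ENNReal NNReal

section Cesaro

variable {α : Type*} [MeasurableSpace α] {f : α → α} {ν : Measure α} {m : ℕ} {s : Set α}

/-- For `m = 0` this is the zero measure. -/
noncomputable def cesaroMeasure (f : α → α) (ν : Measure α) (m : ℕ) : Measure α :=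
  (m : ℝ≥0)⁻¹ • ∑ i ∈ Finset.range m, ν.map f^[i]

instance [IsFiniteMeasure ν] : IsFiniteMeasure (cesaroMeasure f ν m) := by
  unfold cesaroMeasure; infer_instance

lemma cesaroMeasure_apply (hf : Measurable f) (hs : MeasurableSet s) :
    cesaroMeasure f ν m s = (m : ℝ≥0)⁻¹ • ∑ i ∈ Finset.range m, ν (f^[i] ⁻¹' s) := by
  simp only [cesaroMeasure, Measure.smul_apply, Measure.coe_finsetSum,
    Finset.sum_apply, Measure.map_apply (hf.iterate _) hs]

lemma cesaroMeasure_real_apply (hf : Measurable f) [IsFiniteMeasure ν] (hs : MeasurableSet s) :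
    (cesaroMeasure f ν m).real s = (∑ i ∈ Finset.range m, ν.real (f^[i] ⁻¹' s)) / m := by
  rw [measureReal_def, cesaroMeasure_apply hf hs, ENNReal.toReal_smul,
    ENNReal.toReal_sum fun i _ => measure_ne_top ν _]
  simp [measureReal_def, div_eq_inv_mul, NNReal.smul_def]

lemma isProbabilityMeasure_cesaroMeasure (hf : Measurable f) [IsProbabilityMeasure ν]
    (hm : m ≠ 0) : IsProbabilityMeasure (cesaroMeasure f ν m) := by
  refine ⟨?_⟩
  rw [← ofReal_measureReal, cesaroMeasure_real_apply hf .univ]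
  simp [hm]

lemma cesaroMeasure_compl_eq_zero (hf : Measurable f) (hs : MeasurableSet s)
    (hfs : MapsTo f s s) (hν : ν sᶜ = 0) : cesaroMeasure f ν m sᶜ = 0 := by
  rw [cesaroMeasure_apply hf hs.compl, Finset.sum_eq_zero, smul_zero]
  intro i _
  exact measure_mono_null (compl_subset_compl.2 (hfs.iterate i)) hν

lemma cesaroMeasure_real_preimage_sub (hf : Measurable f) [IsFiniteMeasure ν]
    (hs : MeasurableSet s) :
    (cesaroMeasure f ν m).real (f ⁻¹' s) - (cesaroMeasure f ν m).real s
      = (ν.real (f^[m] ⁻¹' s) - ν.real s) / m := by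
  have hshift : ∀ i, f^[i] ⁻¹' (f ⁻¹' s) = f^[i + 1] ⁻¹' s := fun i => by
    rw [iterate_succ', preimage_comp]
  have hsum := Finset.sum_range_succ' (fun i => ν.real (f^[i] ⁻¹' s)) m
  rw [Finset.sum_range_succ] at hsum
  simp only [cesaroMeasure_real_apply hf (hf hs), cesaroMeasure_real_apply hf hs, hshift]
  rw [← sub_div]
  congr 1
  simp only [iterate_zero, preimage_id] at hsum
  linarith

lemma tendsto_cesaroMeasure_real_preimage_sub (hf : Measurable f) [IsProbabilityMeasure ν]
    (hs : MeasurableSet s) :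
    Tendsto (fun m => (cesaroMeasure f ν m).real (f ⁻¹' s) - (cesaroMeasure f ν m).real s)
      atTop (𝓝 0) := by
  simp_rw [cesaroMeasure_real_preimage_sub hf hs]
  refine squeeze_zero_norm (fun m => ?_) tendsto_one_div_atTop_nhds_zero_nat
  rw [norm_div, Real.norm_natCast]
  refine div_le_div_of_nonneg_right ?_ m.cast_nonneg
  exact abs_sub_le_of_nonneg_of_le measureReal_nonneg measureReal_le_one measureReal_nonneg
    measureReal_le_one

lemma Function.IsPeriodicPt.measurePreserving_cesaroMeasure_dirac (hf : Measurable f) {x : α}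
    {p : ℕ} (hx : IsPeriodicPt f p x) :
    MeasurePreserving f (cesaroMeasure f (.dirac x) p) (cesaroMeasure f (.dirac x) p) := by
  refine ⟨hf, Measure.ext fun s hs => ?_⟩
  have hret : (Measure.dirac x).real (f^[p] ⁻¹' s) = (Measure.dirac x).real s := by
    rw [measureReal_def, ← Measure.map_apply (hf.iterate p) hs, Measure.map_dirac' (hf.iterate p),
      hx.eq, measureReal_def]
  have := cesaroMeasure_real_preimage_sub (m := p) hf hs (ν := .dirac x)
  rw [hret, sub_self, zero_div, sub_eq_zero, measureReal_eq_measureReal_iff] at this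
  rwa [Measure.map_apply hf hs]

end Cesaro

lemma exists_forall_tendsto_ultrafilter {ι β X : Type*} [TopologicalSpace X] (U : Ultrafilter ι)
    {K : Set X} (hK : IsCompact K) {F : ι → β → X} (hF : ∀ x, ∀ᶠ i in U, F i x ∈ K) :
    ∃ J : β → X, ∀ x, Tendsto (F · x) U (𝓝 (J x)) := by
  choose J _ hJ using fun x => hK.ultrafilter_le_nhds (U.map (F · x)) (le_principal_iff.2 (hF x))
  exact ⟨J, hJ⟩

lemma Function.IsPeriodicPt.map_of_mapsTo {α β : Type*} {g : α → α} {f : β → β} {h : α → β}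
    {s : Set α} {y : α} {p : ℕ} (hper : IsPeriodicPt g p y) (hy : y ∈ s) (hg : MapsTo g s s)
    (hconj : ∀ z ∈ s, h (g z) = f (h z)) : IsPeriodicPt f p (h y) := by
  have hres : IsPeriodicPt (hg.restrict g s s) p ⟨y, hy⟩ := by
    rw [IsPeriodicPt, IsFixedPt, hg.iterate_restrict, Subtype.ext_iff]
    exact hper.eq
  exact hres.map (g := fun z : s => h z) fun z => hconj z z.2

lemma Set.MapsTo.exists_isPeriodicPt {α : Type*} {f : α → α} {s : Set α} (hf : MapsTo f s s)
    (hs : s.Finite) {x : α} (hx : x ∈ s) : ∃ y ∈ s, ∃ p, 0 < p ∧ IsPeriodicPt f p y := by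
  obtain ⟨m, m', hlt, heq⟩ :=
    hs.exists_lt_map_eq_of_forall_mem (f := fun k => f^[k] x) fun k => hf.iterate k hx
  refine ⟨f^[m] x, hf.iterate m hx, m' - m, by omega, ?_⟩
  rw [IsPeriodicPt, IsFixedPt, ← iterate_add_apply, Nat.sub_add_cancel hlt.le]
  exact heq.symm

lemma Monotone.card_mul_le_of_le_jump {J : ℝ → ℝ} (hJ : Monotone J) {δ a b : ℝ} (hab : a < b)
    (s : Finset ℝ) (hs : ∀ y ∈ s, a < y ∧ y < b ∧ δ ≤ J y - leftLim J y) :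
    s.card * δ ≤ leftLim J b - J a := by
  induction s using Finset.induction_on_max generalizing b with
  | empty => simpa using hJ.le_leftLim hab
  | insert y s hlt ih =>
    obtain ⟨hay, hyb, hjump⟩ := hs y (Finset.mem_insert_self y s)
    have hs' : ∀ x ∈ s, a < x ∧ x < y ∧ δ ≤ J x - leftLim J x := fun x hx =>
      ⟨(hs x (Finset.mem_insert_of_mem hx)).1, hlt x hx, (hs x (Finset.mem_insert_of_mem hx)).2.2⟩
    have hys : y ∉ s := fun h => (hlt y h).false
    rw [Finset.card_insert_of_notMem hys, Nat.cast_succ]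
    linarith [ih hay hs', hJ.le_leftLim hyb]

lemma Monotone.finite_setOf_le_jump {J : ℝ → ℝ} (hJ : Monotone J) {l u : ℝ}
    (hbdd : ∀ x, J x ∈ Icc l u) {δ : ℝ} (hδ : 0 < δ) :
    {y | δ ≤ J y - leftLim J y}.Finite := by
  by_contra hinf
  obtain ⟨s, hsub, hcard⟩ := Set.Infinite.exists_subset_card_eq hinf (⌈(u - l) / δ⌉₊ + 1)
  obtain ⟨a, ha⟩ := s.bddBelow
  obtain ⟨b, hb⟩ := s.bddAbove
  have hmass := hJ.card_mul_le_of_le_jump (a := a - 1) (b := max a b + 1)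
    (by linarith [le_max_left a b]) s
    fun y hy => ⟨by linarith [ha hy], by linarith [hb hy, le_max_right a b], hsub hy⟩
  have hceil := Nat.le_ceil ((u - l) / δ)
  rw [div_le_iff₀ hδ] at hceil
  rw [hcard, Nat.cast_succ] at hmass
  linarith [hJ.leftLim_le (le_refl (max a b + 1)), (hbdd (max a b + 1)).2, (hbdd (a - 1)).1]

lemma measureReal_Iio_of_nonpos {μ : Measure ℝ} (hμ : μ (Ico 0 1)ᶜ = 0) {b : ℝ} (hb : b ≤ 0) :
    μ.real (Iio b) = 0 := by
  have : Iio b ⊆ (Ico 0 1)ᶜ := fun x hx hx' => by linarith [hx'.1, mem_Iio.1 hx]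
  simp [measureReal_def, measure_mono_null this hμ]

lemma measureReal_Iio_of_one_le {μ : Measure ℝ} [IsProbabilityMeasure μ]
    (hμ : μ (Ico 0 1)ᶜ = 0) {b : ℝ} (hb : 1 ≤ b) : μ.real (Iio b) = 1 := by
  have : (Iio b)ᶜ ⊆ (Ico 0 1)ᶜ := compl_subset_compl.2 fun x hx => mem_Iio.2 (by linarith [hx.2])
  simp [measureReal_def, (prob_compl_eq_zero_iff measurableSet_Iio).1 (measure_mono_null this hμ)]

/-- An interval translation map with pieces indexed from `0`: it is `x ↦ x + c j` on
`[t j, t (j + 1))` for `j < n`. The partition points are extended monotonically beyond `n`. -/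
structure IntervalTranslationMap where
  n : ℕ
  t : ℕ → ℝ
  c : ℕ → ℝ
  monotone_t : Monotone t
  t_zero : t 0 = 0
  t_n : t n = 1
  zero_le_t_add_c : ∀ j < n, 0 ≤ t j + c j
  t_succ_add_c_le_one : ∀ j < n, t (j + 1) + c j ≤ 1

namespace IntervalTranslationMap

variable (T : IntervalTranslationMap) {j : ℕ} {x y b : ℝ}

noncomputable def translate (s : ℕ → Set ℝ) (x : ℝ) : ℝ :=
  x + ∑ j ∈ Finset.range T.n, (s j).indicator (fun _ => T.c j) x

noncomputable instance : CoeFun IntervalTranslationMap (fun _ => ℝ → ℝ) :=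
  ⟨fun T => T.translate fun j => Ico (T.t j) (T.t (j + 1))⟩

/-- The pieces closed on the right instead: `T.leftMap y` is where `T` sends the points just
to the left of `y`. -/
noncomputable def leftMap : ℝ → ℝ :=
  T.translate fun j => Ioc (T.t j) (T.t (j + 1))

/-- `T ⁻¹' Iio b` meets the `j`-th piece in `[t j, T.cutoff j b)`. -/
def cutoff (j : ℕ) (b : ℝ) : ℝ :=
  max (T.t j) (min (T.t (j + 1)) (b - T.c j))

lemma zero_le_t : 0 ≤ T.t j := T.t_zero ▸ T.monotone_t j.zero_le

lemma t_le_one (hj : j ≤ T.n) : T.t j ≤ 1 := T.t_n ▸ T.monotone_t hj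

lemma translate_of_mem {s : ℕ → Set ℝ} (hs : Pairwise (Disjoint on s)) (hj : j < T.n)
    (hx : x ∈ s j) : T.translate s x = x + T.c j := by
  rw [translate, Finset.sum_eq_single_of_mem j (Finset.mem_range.2 hj), indicator_of_mem hx]
  exact fun k _ hk => indicator_of_notMem ((hs hk).notMem_of_mem_right hx) _

lemma pairwise_disjoint_Ico : Pairwise (Disjoint on fun j => Ico (T.t j) (T.t (j + 1))) := by
  simpa using T.monotone_t.pairwise_disjoint_on_Ico_succ

lemma apply_of_mem_Ico (hj : j < T.n) (hx : x ∈ Ico (T.t j) (T.t (j + 1))) : T x = x + T.c j :=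
  T.translate_of_mem T.pairwise_disjoint_Ico hj hx

lemma leftMap_of_mem_Ioc (hj : j < T.n) (hx : x ∈ Ioc (T.t j) (T.t (j + 1))) :
    T.leftMap x = x + T.c j :=
  T.translate_of_mem (by simpa using T.monotone_t.pairwise_disjoint_on_Ioc_succ) hj hx

lemma exists_mem_Ico (hx : x ∈ Ico 0 1) : ∃ j < T.n, x ∈ Ico (T.t j) (T.t (j + 1)) := by
  obtain ⟨j, hj, hxj⟩ := mem_iUnion₂.1 (Ico_subset_biUnion_Ico T.n T.t (by rwa [T.t_zero, T.t_n]))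
  exact ⟨j, Finset.mem_range.1 hj, hxj⟩

lemma exists_mem_Ioc (hx : x ∈ Ioc 0 1) : ∃ j < T.n, x ∈ Ioc (T.t j) (T.t (j + 1)) := by
  obtain ⟨j, hj, hxj⟩ := mem_iUnion₂.1 (Ioc_subset_biUnion_Ioc T.n T.t (by rwa [T.t_zero, T.t_n]))
  exact ⟨j, Finset.mem_range.1 hj, hxj⟩

lemma measurable : Measurable T :=
  measurable_id.add <|
    Finset.measurable_sum _ fun _ _ => measurable_const.indicator measurableSet_Ico

lemma mapsTo_Ico : MapsTo T (Ico 0 1) (Ico 0 1) := fun x hx => by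
  obtain ⟨j, hj, hxj⟩ := T.exists_mem_Ico hx
  rw [T.apply_of_mem_Ico hj hxj]
  constructor <;> linarith [hxj.1, hxj.2, T.zero_le_t_add_c j hj, T.t_succ_add_c_le_one j hj]

lemma mapsTo_leftMap_Ioc : MapsTo T.leftMap (Ioc 0 1) (Ioc 0 1) := fun y hy => by
  obtain ⟨j, hj, hyj⟩ := T.exists_mem_Ioc hy
  rw [T.leftMap_of_mem_Ioc hj hyj]
  constructor <;> linarith [hyj.1, hyj.2, T.zero_le_t_add_c j hj, T.t_succ_add_c_le_one j hj]

lemma monotone_cutoff (j : ℕ) : Monotone (T.cutoff j) := fun _ _ h => by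
  unfold cutoff; gcongr

lemma t_le_cutoff : T.t j ≤ T.cutoff j b := le_max_left _ _

lemma cutoff_le : T.cutoff j b ≤ T.t (j + 1) :=
  max_le (T.monotone_t j.le_succ) (min_le_left _ _)

lemma preimage_Iio_inter_Ico (b : ℝ) :
    T ⁻¹' Iio b ∩ Ico 0 1 = ⋃ j ∈ Finset.range T.n, Ico (T.t j) (T.cutoff j b) := by
  ext x
  simp only [mem_inter_iff, mem_preimage, mem_Iio, mem_iUnion, Finset.mem_range, mem_Ico,
    cutoff, lt_max_iff, lt_min_iff, exists_prop]
  constructor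
  · rintro ⟨hxb, hx⟩
    obtain ⟨j, hj, hxj⟩ := T.exists_mem_Ico hx
    rw [T.apply_of_mem_Ico hj hxj] at hxb
    exact ⟨j, hj, hxj.1, .inr ⟨hxj.2, by linarith⟩⟩
  · rintro ⟨j, hj, htx, hxt | ⟨hxt, hxb⟩⟩
    · exact absurd htx (not_le.2 hxt)
    · rw [T.apply_of_mem_Ico hj ⟨htx, hxt⟩]
      exact ⟨by linarith, T.zero_le_t.trans htx, hxt.trans_le (T.t_le_one hj)⟩

lemma cutoff_of_le (hb : b ≤ T.t j + T.c j) : T.cutoff j b = T.t j :=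
  max_eq_left ((min_le_right _ _).trans (by linarith))

lemma cutoff_of_mem (hb : b - T.c j ∈ Icc (T.t j) (T.t (j + 1))) : T.cutoff j b = b - T.c j := by
  rw [cutoff, min_eq_right hb.2, max_eq_right hb.1]

lemma cutoff_of_ge (hb : T.t (j + 1) + T.c j ≤ b) : T.cutoff j b = T.t (j + 1) := by
  rw [cutoff, min_eq_left (by linarith), max_eq_right (T.monotone_t j.le_succ)]

lemma measureReal_preimage_Iio (μ : Measure ℝ) [IsFiniteMeasure μ] (hμ : μ (Ico 0 1)ᶜ = 0)
    (b : ℝ) : μ.real (T ⁻¹' Iio b)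
      = ∑ j ∈ Finset.range T.n, (μ.real (Iio (T.cutoff j b)) - μ.real (Iio (T.t j))) := by
  have hsub : ∀ j, Ico (T.t j) (T.cutoff j b) ⊆ Ico (T.t j) (T.t (j + 1)) := fun j =>
    Ico_subset_Ico_right T.cutoff_le
  rw [← measureReal_congr (inter_ae_eq_left_of_ae_eq_univ (ae_eq_univ.2 hμ)),
    T.preimage_Iio_inter_Ico, measureReal_biUnion_finset
      (fun i _ k _ hik => (T.pairwise_disjoint_Ico hik).mono (hsub i) (hsub k))
      (fun _ _ => measurableSet_Ico)]
  refine Finset.sum_congr rfl fun j _ => ?_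
  rw [← Iio_sdiff_Iio, measureReal_sdiff (Iio_subset_Iio T.t_le_cutoff) measurableSet_Iio]

/-- The conditions met by `b ↦ μ.real (Iio b)` for a `T`-invariant probability measure `μ`
on `[0, 1)`. -/
structure IsInvariantCDF (J : ℝ → ℝ) : Prop where
  mono : Monotone J
  eq_zero : ∀ b ≤ 0, J b = 0
  eq_one : ∀ b, 1 ≤ b → J b = 1
  eq_sum : ∀ b, J b = ∑ j ∈ Finset.range T.n, (J (T.cutoff j b) - J (T.t j))

lemma isInvariantCDF_of_tendsto {ι : Type*} {l : Filter ι} [l.NeBot] {G : ι → ℝ → ℝ}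
    {J : ℝ → ℝ} (hG : ∀ᶠ i in l, Monotone (G i) ∧ (∀ b ≤ 0, G i b = 0) ∧ ∀ b, 1 ≤ b → G i b = 1)
    (hsum : ∀ b, Tendsto
      (fun i => ∑ j ∈ Finset.range T.n, (G i (T.cutoff j b) - G i (T.t j)) - G i b) l (𝓝 0))
    (hJ : ∀ b, Tendsto (fun i => G i b) l (𝓝 (J b))) : T.IsInvariantCDF J where
  mono a b hab := le_of_tendsto_of_tendsto (hJ a) (hJ b) (hG.mono fun _ hi => hi.1 hab)
  eq_zero b hb := tendsto_nhds_unique (hJ b)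
    (tendsto_const_nhds.congr' (hG.mono fun _ hi => (hi.2.1 b hb).symm))
  eq_one b hb := tendsto_nhds_unique (hJ b)
    (tendsto_const_nhds.congr' (hG.mono fun _ hi => (hi.2.2 b hb).symm))
  eq_sum b := by
    have hlim := (tendsto_finsetSum (Finset.range T.n) fun j _ =>
      (hJ (T.cutoff j b)).sub (hJ (T.t j))).sub (hJ b)
    linarith [tendsto_nhds_unique hlim (hsum b)]

theorem exists_isInvariantCDF : ∃ J, T.IsInvariantCDF J := by
  have : IsProbabilityMeasure (volume.restrict (Ico (0 : ℝ) 1)) := ⟨by simp⟩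
  set ν := cesaroMeasure T (volume.restrict (Ico 0 1))
  have hν : ∀ m, ν m (Ico 0 1)ᶜ = 0 := fun m =>
    cesaroMeasure_compl_eq_zero T.measurable measurableSet_Ico T.mapsTo_Ico (by simp)
  let U := Ultrafilter.of (atTop : Filter ℕ)
  have hprob : ∀ᶠ m in (U : Filter ℕ), IsProbabilityMeasure (ν m) :=
    ((eventually_ne_atTop 0).filter_mono (Ultrafilter.of_le _)).mono fun m hm =>
      isProbabilityMeasure_cesaroMeasure T.measurable hm
  obtain ⟨J, hJ⟩ := exists_forall_tendsto_ultrafilter U isCompact_Icc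
    (F := fun m b => (ν m).real (Iio b)) fun b =>
      hprob.mono fun m _ => ⟨measureReal_nonneg, measureReal_le_one⟩
  refine ⟨J, T.isInvariantCDF_of_tendsto (hprob.mono fun m _ => ⟨?_, ?_, ?_⟩) (fun b => ?_) hJ⟩
  · exact fun a b hab => measureReal_mono (Iio_subset_Iio hab)
  · exact fun b hb => measureReal_Iio_of_nonpos (hν m) hb
  · exact fun b hb => measureReal_Iio_of_one_le (hν m) hb
  · simp_rw [← T.measureReal_preimage_Iio _ (hν _)]
    exact (tendsto_cesaroMeasure_real_preimage_sub T.measurable measurableSet_Iio).mono_left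
      (Ultrafilter.of_le _)

lemma eventually_apply_sub (hy : y ∈ Ioc 0 1) :
    ∀ᶠ ε in 𝓝[>] 0, y - ε ∈ Ico 0 1 ∧ T (y - ε) = T.leftMap y - ε := by
  obtain ⟨j, hj, hyj⟩ := T.exists_mem_Ioc hy
  filter_upwards [Ioo_mem_nhdsGT (sub_pos.2 hyj.1)] with ε hε
  have hmem : y - ε ∈ Ico (T.t j) (T.t (j + 1)) :=
    ⟨by linarith [hε.2], by linarith [hε.1, hyj.2]⟩
  refine ⟨⟨T.zero_le_t.trans hmem.1, hmem.2.trans_le (T.t_le_one hj)⟩, ?_⟩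
  rw [T.apply_of_mem_Ico hj hmem, T.leftMap_of_mem_Ioc hj hyj]
  ring

namespace IsInvariantCDF

variable {T} {J : ℝ → ℝ} {y : ℝ}

lemma mem_Icc (hJ : T.IsInvariantCDF J) (x : ℝ) : J x ∈ Icc 0 1 :=
  ⟨hJ.eq_zero _ (min_le_right x 0) ▸ hJ.mono (min_le_left x 0),
    hJ.eq_one _ (le_max_right x 1) ▸ hJ.mono (le_max_left x 1)⟩

lemma leftLim_eq_zero (hJ : T.IsInvariantCDF J) (hb : b ≤ 0) : leftLim J b = 0 :=
  le_antisymm (hJ.eq_zero b hb ▸ hJ.mono.leftLim_le le_rfl)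
    (hJ.eq_zero (b - 1) (by linarith) ▸ hJ.mono.le_leftLim (sub_one_lt b))

lemma sub_le_sub_add_c (hJ : T.IsInvariantCDF J) (hj : j < T.n) {x : ℝ} (hxy : x ≤ y)
    (hx : T.t j ≤ x) (hy : y ≤ T.t (j + 1)) :
    J y - J x ≤ J (y + T.c j) - J (x + T.c j) := by
  rw [hJ.eq_sum (y + T.c j), hJ.eq_sum (x + T.c j), ← Finset.sum_sub_distrib]
  have hterm : ∀ i ∈ Finset.range T.n, 0 ≤ (J (T.cutoff i (y + T.c j)) - J (T.t i))
      - (J (T.cutoff i (x + T.c j)) - J (T.t i)) := fun i _ => by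
    linarith [hJ.mono (T.monotone_cutoff i (by linarith : x + T.c j ≤ y + T.c j))]
  refine le_trans ?_ (Finset.single_le_sum hterm (Finset.mem_range.2 hj))
  rw [T.cutoff_of_mem (b := y + T.c j) (by simpa using ⟨hx.trans hxy, hy⟩),
    T.cutoff_of_mem (b := x + T.c j) (by simpa using ⟨hx, hxy.trans hy⟩)]
  simp

lemma jump_le_jump_leftMap (hJ : T.IsInvariantCDF J) (hy : y ∈ Ioc 0 1) :
    J y - leftLim J y ≤ J (T.leftMap y) - leftLim J (T.leftMap y) := by
  obtain ⟨j, hj, hyj⟩ := T.exists_mem_Ioc hy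
  rw [T.leftMap_of_mem_Ioc hj hyj]
  refine le_of_tendsto_of_tendsto (tendsto_const_nhds.sub (hJ.mono.tendsto_leftLim y))
    (tendsto_const_nhds.sub ((hJ.mono.tendsto_leftLim _).comp map_add_right_nhdsLT.le)) ?_
  filter_upwards [Ico_mem_nhdsLT hyj.1] with x hx
  exact hJ.sub_le_sub_add_c hj hx.2.le hx.1 hyj.2

lemma exists_isPeriodicPt (hJ : T.IsInvariantCDF J) (hj : j ≤ T.n)
    (hjump : leftLim J (T.t j) ≠ J (T.t j)) : ∃ x ∈ Ico 0 1, ∃ p, 0 < p ∧ IsPeriodicPt T p x := by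
  set δ := J (T.t j) - leftLim J (T.t j)
  have hδ : 0 < δ := sub_pos.2 ((hJ.mono.leftLim_le le_rfl).lt_of_ne hjump)
  set O := Ioc 0 1 ∩ {y | δ ≤ J y - leftLim J y}
  have hO : O.Finite := (hJ.mono.finite_setOf_le_jump hJ.mem_Icc hδ).inter_of_right _
  have hmaps : MapsTo T.leftMap O O := fun y hy =>
    ⟨T.mapsTo_leftMap_Ioc hy.1, hy.2.trans (hJ.jump_le_jump_leftMap hy.1)⟩
  have htj : T.t j ∈ O := by
    refine ⟨⟨T.zero_le_t.lt_of_ne fun h => hjump ?_, T.t_le_one hj⟩, show δ ≤ δ from le_rfl⟩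
    rw [← h, hJ.leftLim_eq_zero le_rfl, hJ.eq_zero 0 le_rfl]
  obtain ⟨w, hwO, p, hp, hw⟩ := hmaps.exists_isPeriodicPt hO htj
  obtain ⟨ε, hε⟩ := ((eventually_all_finite hO).2 fun y hy => T.eventually_apply_sub hy.1).exists
  exact ⟨w - ε, (hε w hwO).1, p, hp,
    hw.map_of_mapsTo (h := fun z => z - ε) hwO hmaps fun z hz => (hε z hz).2.symm⟩

lemma tendsto_comp_cutoff (hJ : T.IsInvariantCDF J) (h₀ : leftLim J (T.t j) = J (T.t j))
    (h₁ : leftLim J (T.t (j + 1)) = J (T.t (j + 1))) (b : ℝ) :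
    Tendsto (fun x => J (T.cutoff j x)) (𝓝[<] b) (𝓝 (leftLim J (T.cutoff j b))) := by
  rcases le_or_gt b (T.t j + T.c j) with hb | hb
  · rw [T.cutoff_of_le hb, h₀]
    exact tendsto_const_nhds.congr' (eventually_nhdsWithin_of_forall fun x hx =>
      congrArg J (T.cutoff_of_le ((le_of_lt hx).trans hb)).symm)
  rcases le_or_gt b (T.t (j + 1) + T.c j) with hb' | hb'
  · rw [T.cutoff_of_mem ⟨by linarith, by linarith⟩]
    refine ((hJ.mono.tendsto_leftLim _).comp map_subRight_nhdsLT.le).congr' ?_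
    filter_upwards [Ioo_mem_nhdsLT hb] with x hx
    rw [Function.comp_apply, T.cutoff_of_mem ⟨by linarith [hx.1], by linarith [hx.2]⟩]
  · rw [T.cutoff_of_ge hb'.le, h₁]
    refine tendsto_const_nhds.congr' ?_
    filter_upwards [Ioo_mem_nhdsLT hb'] with x hx
    exact congrArg J (T.cutoff_of_ge hx.1.le).symm

lemma measure_compl_Ico_eq_zero {μ : Measure ℝ} [IsProbabilityMeasure μ]
    (h : T.IsInvariantCDF fun b => μ.real (Iio b)) : μ (Ico 0 1)ᶜ = 0 := by
  rw [prob_compl_eq_zero_iff measurableSet_Ico, ← ofReal_measureReal, ← Iio_sdiff_Iio,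
    measureReal_sdiff (Iio_subset_Iio zero_le_one) measurableSet_Iio, h.eq_one 1 le_rfl,
    h.eq_zero 0 le_rfl]
  simp

lemma measurePreserving {μ : Measure ℝ} [IsProbabilityMeasure μ]
    (h : T.IsInvariantCDF fun b => μ.real (Iio b)) : MeasurePreserving T μ μ := by
  refine ⟨T.measurable, ext_of_generate_finite _
    (BorelSpace.measurable_eq.trans (borel_eq_generateFrom_Iio ℝ)) isPiSystem_Iio ?_ ?_⟩
  · rintro _ ⟨b, rfl⟩
    rw [Measure.map_apply T.measurable measurableSet_Iio, ← measureReal_eq_measureReal_iff,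
      T.measureReal_preimage_Iio μ h.measure_compl_Ico_eq_zero, ← h.eq_sum b]
  · rw [Measure.map_apply T.measurable .univ, preimage_univ]

lemma leftLim (hJ : T.IsInvariantCDF J) (hcont : ∀ j ≤ T.n, leftLim J (T.t j) = J (T.t j)) :
    T.IsInvariantCDF (Function.leftLim J) where
  mono := hJ.mono.leftLim
  eq_zero _ hb := hJ.leftLim_eq_zero hb
  eq_one b hb := le_antisymm (hJ.eq_one b hb ▸ hJ.mono.leftLim_le le_rfl) <| by
    calc (1 : ℝ) = Function.leftLim J (T.t T.n) := by
          rw [hcont T.n le_rfl, T.t_n, hJ.eq_one 1 le_rfl]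
      _ ≤ Function.leftLim J b := hJ.mono.leftLim (T.t_n ▸ hb)
  eq_sum b := by
    have hsum := tendsto_finsetSum (Finset.range T.n) fun j hj =>
      (hJ.tendsto_comp_cutoff (hcont j (Finset.mem_range.1 hj).le)
        (hcont (j + 1) (Finset.mem_range.1 hj)) b).sub_const (J (T.t j))
    rw [tendsto_nhds_unique (hJ.mono.tendsto_leftLim b) (hsum.congr fun x => (hJ.eq_sum x).symm)]
    exact Finset.sum_congr rfl fun j hj => by rw [hcont j (Finset.mem_range.1 hj).le]

end IsInvariantCDF

variable {J : ℝ → ℝ}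

theorem exists_measurePreserving_of_leftLim_eq (hJ : T.IsInvariantCDF J)
    (hcont : ∀ j ≤ T.n, leftLim J (T.t j) = J (T.t j)) :
    ∃ μ : Measure ℝ, IsProbabilityMeasure μ ∧ μ (Ico 0 1)ᶜ = 0 ∧ MeasurePreserving T μ μ := by
  set F := hJ.mono.stieltjesFunction
  have hF_bot : Tendsto F atBot (𝓝 0) := by
    refine tendsto_const_nhds.congr' ?_
    filter_upwards [eventually_lt_atBot 0] with x hx
    exact le_antisymm (hJ.eq_zero x hx.le ▸ hJ.mono.le_rightLim le_rfl)
      (hJ.eq_zero 0 le_rfl ▸ hJ.mono.rightLim_le hx)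
  have hF_top : Tendsto F atTop (𝓝 1) := by
    refine tendsto_const_nhds.congr' ?_
    filter_upwards [eventually_ge_atTop 1] with x hx
    exact le_antisymm (hJ.eq_one x hx ▸ hJ.mono.le_rightLim le_rfl)
      (hJ.eq_one (x + 1) (by linarith) ▸ hJ.mono.rightLim_le (lt_add_one x))
  have := F.isProbabilityMeasure hF_bot hF_top
  have hcdf : (fun b => F.measure.real (Iio b)) = leftLim J := funext fun b => by
    rw [measureReal_def, F.measure_Iio hF_bot, sub_zero, show ⇑F = rightLim J from
      funext hJ.mono.stieltjesFunction_eq, leftLim_rightLim (hJ.mono.tendsto_leftLim b)]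
    exact ENNReal.toReal_ofReal ((hJ.mem_Icc (b - 1)).1.trans (hJ.mono.le_leftLim (sub_one_lt b)))
  have hG := hJ.leftLim hcont
  rw [← hcdf] at hG
  exact ⟨F.measure, this, hG.measure_compl_Ico_eq_zero, hG.measurePreserving⟩

theorem exists_measurePreserving :
    ∃ μ : Measure ℝ, IsProbabilityMeasure μ ∧ μ (Ico 0 1)ᶜ = 0 ∧ MeasurePreserving T μ μ := by
  obtain ⟨J, hJ⟩ := T.exists_isInvariantCDF
  by_cases hcont : ∀ j ≤ T.n, leftLim J (T.t j) = J (T.t j)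
  · exact T.exists_measurePreserving_of_leftLim_eq hJ hcont
  push Not at hcont
  obtain ⟨j, hj, hjump⟩ := hcont
  obtain ⟨x, hx, p, hp, hper⟩ := hJ.exists_isPeriodicPt hj hjump
  exact ⟨cesaroMeasure T (.dirac x) p, isProbabilityMeasure_cesaroMeasure T.measurable hp.ne',
    cesaroMeasure_compl_eq_zero T.measurable measurableSet_Ico T.mapsTo_Ico (by simp [hx]),
    hper.measurePreserving_cesaroMeasure_dirac T.measurable⟩

/-- Pieces numbered from `1`: the map is `x ↦ x + c k` on `[t (k - 1), t k)` for `1 ≤ k ≤ n`. -/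
def ofPartition (n : ℕ) (t c : ℕ → ℝ) (ht0 : t 0 = 0) (htn : t n = 1)
    (htmono : ∀ k, k < n → t k < t (k + 1))
    (hc : ∀ k, 1 ≤ k → k ≤ n → 0 ≤ t (k - 1) + c k ∧ t k + c k ≤ 1) : IntervalTranslationMap where
  n := n
  t k := t (min k n)
  c j := c (j + 1)
  monotone_t := monotone_nat_of_le_succ fun k => by
    rcases lt_or_ge k n with hk | hk
    · rw [min_eq_left hk.le, min_eq_left (Nat.succ_le_of_lt hk)]
      exact (htmono k hk).le
    · simp [min_eq_right hk, min_eq_right (hk.trans k.le_succ)]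
  t_zero := by simpa using ht0
  t_n := by simpa using htn
  zero_le_t_add_c j hj := by simpa [hj.le] using (hc (j + 1) (by omega) hj).1
  t_succ_add_c_le_one j hj := by simpa [hj] using (hc (j + 1) (by omega) hj).2

lemma eqOn_ofPartition {n : ℕ} {t c : ℕ → ℝ} {S : ℝ → ℝ} (ht0 : t 0 = 0) (htn : t n = 1)
    (htmono : ∀ k, k < n → t k < t (k + 1))
    (hc : ∀ k, 1 ≤ k → k ≤ n → 0 ≤ t (k - 1) + c k ∧ t k + c k ≤ 1)
    (hS : ∀ k, 1 ≤ k → k ≤ n → ∀ x ∈ Ico (t (k - 1)) (t k), S x = x + c k) :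
    EqOn S (ofPartition n t c ht0 htn htmono hc) (Ico 0 1) := fun x hx => by
  set T := ofPartition n t c ht0 htn htmono hc
  obtain ⟨j, hj, hxj⟩ := T.exists_mem_Ico hx
  have hjn : j < n := hj
  rw [T.apply_of_mem_Ico hj hxj]
  exact hS (j + 1) (by omega) hjn x (by
    simpa [T, ofPartition, min_eq_left hjn.le, min_eq_left (Nat.succ_le_of_lt hjn)] using hxj)

end IntervalTranslationMap

theorem itm_exists_invariant_measure_general
    (n : ℕ) (t c : ℕ → ℝ) (S : ℝ → ℝ)
    (ht0 : t 0 = 0) (htn : t n = 1)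
    (htmono : ∀ k, k < n → t k < t (k + 1))
    (hc : ∀ k, 1 ≤ k → k ≤ n → 0 ≤ t (k - 1) + c k ∧ t k + c k ≤ 1)
    (hS : ∀ k, 1 ≤ k → k ≤ n → ∀ x ∈ Ico (t (k - 1)) (t k), S x = x + c k) :
    ∃ μ : Measure ℝ, IsProbabilityMeasure μ ∧ μ (Ico (0 : ℝ) 1) = 1 ∧
      ∀ A : Set ℝ, MeasurableSet A → μ (S ⁻¹' A) = μ A := by
  set T := IntervalTranslationMap.ofPartition n t c ht0 htn htmono hc
  have hST : EqOn S T (Ico 0 1) := IntervalTranslationMap.eqOn_ofPartition ht0 htn htmono hc hS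
  obtain ⟨μ, hμ, hμI, hT⟩ := T.exists_measurePreserving
  refine ⟨μ, hμ, (prob_compl_eq_zero_iff measurableSet_Ico).1 hμI, fun A hA => ?_⟩
  rw [← hT.measure_preimage hA.nullMeasurableSet]
  refine measure_congr ?_
  filter_upwards [mem_ae_iff.2 hμI] with x hx
  exact congrArg (· ∈ A) (hST hx)

/-- Any interval translation map `S` on `[0,1)` admits an invariant
Borel probability measure. The ITM is given by partition points
`0 = t 0 < t 1 < … < t n = 1` and translation constants `c 1, …, c n` with
`0 ≤ t (k-1) + c k` and `t k + c k ≤ 1`, via `S x = x + c k` on `[t (k-1), t k)`. -/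
theorem itm_exists_invariant_measure
    (n : ℕ) (hn : 0 < n) (t c : ℕ → ℝ) (S : ℝ → ℝ)
    (ht0 : t 0 = 0) (htn : t n = 1)
    (htmono : ∀ k, k < n → t k < t (k + 1))
    (hc : ∀ k, 1 ≤ k → k ≤ n → 0 ≤ t (k - 1) + c k ∧ t k + c k ≤ 1)
    (hS : ∀ k, 1 ≤ k → k ≤ n → ∀ x ∈ Ico (t (k - 1)) (t k), S x = x + c k) :
    ∃ μ : Measure ℝ, IsProbabilityMeasure μ ∧ μ (Ico (0 : ℝ) 1) = 1 ∧
      ∀ A : Set ℝ, MeasurableSet A → μ (S ⁻¹' A) = μ A :=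
  itm_exists_invariant_measure_general n t c S ht0 htn htmono hc hS
end

section
/- For each m ∈ ℕ, let S_m be an interval translation map of n intervals with partition points t_k^m and translation constants c_k^m, and let S_* be an interval translation map of n intervals with partition points t_k^* and constants c_k^*. Assume t_k^m → t_k^* and c_k^m → c_k^* as m → ∞ for each k. Let μ_m be an S_m-invariant Borel probability measure for each m, and suppose μ_m converges weak-* to a Borel probability measure μ_*. If μ_*({t_k^*}) = 0 for every k = 0, …, n, then μ_* is an S_*-invariant measure. -/
/-!
All the measures live on `[0, 1)`, so the image of a measure under an ITM is the sum of its
restrictions to the pieces `[t_{k-1}, t_k)`, translated by `c_k`. Evaluated on `Iic x`, invariance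
of `μ m` reads `μ m (Iic x) = ∑ k, μ m (Iic (x - c_k) ∩ [t_{k-1}, t_k))`. For all but countably
many `x`, `μstar` has no atom at `x` nor at any `x - c_k^*`, and it has none at the `t_k^*`. Each
moving box on the right differs from its limit box only near these null endpoints, so by the
portmanteau theorem the identity passes to the limit. Finite measures agreeing on `Iic x` for a
dense set of `x` are equal.
-/

open MeasureTheory Set Filter Topology Metric

theorem Iic_inter_Ico_sdiff_cthickening_eq {s a b s₀ a₀ b₀ δ : ℝ} (hs : |s - s₀| ≤ δ)
    (ha : |a - a₀| ≤ δ) (hb : |b - b₀| ≤ δ) :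
    (Iic s ∩ Ico a b) \ cthickening δ {s₀, a₀, b₀} =
      (Iic s₀ ∩ Ico a₀ b₀) \ cthickening δ {s₀, a₀, b₀} := by
  ext x
  simp only [Set.mem_sdiff, mem_inter_iff, mem_Iic, mem_Ico]
  refine and_congr_left fun hx ↦ ?_
  have far : ∀ y ∈ ({s₀, a₀, b₀} : Set ℝ), δ < |x - y| := fun y hy ↦
    not_le.1 fun h ↦ hx (mem_cthickening_of_dist_le x y δ _ hy (by rwa [Real.dist_eq]))
  have hs₀ := far s₀ (by simp)
  have ha₀ := far a₀ (by simp)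
  have hb₀ := far b₀ (by simp)
  rw [abs_le] at hs ha hb
  rw [lt_abs] at hs₀ ha₀ hb₀
  rcases hs₀ with h | h <;> rcases ha₀ with h' | h' <;> rcases hb₀ with h'' | h'' <;>
    constructor <;> rintro ⟨h₁, h₂, h₃⟩ <;> refine ⟨?_, ?_, ?_⟩ <;> linarith

namespace MeasureTheory

theorem Measure.ext_of_Iic_of_dense {α : Type*} [TopologicalSpace α] {m : MeasurableSpace α}
    [SecondCountableTopology α] [LinearOrder α] [OrderTopology α] [BorelSpace α]
    [DenselyOrdered α] [NoMaxOrder α] {μ ν : Measure α} [IsFiniteMeasure μ] {s : Set α}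
    (hs : Dense s) (huniv : μ univ = ν univ) (h : ∀ a ∈ s, μ (Iic a) = ν (Iic a)) : μ = ν := by
  have : IsFiniteMeasure ν := ⟨huniv ▸ measure_lt_top μ univ⟩
  refine ext_of_generate_finite _
    (BorelSpace.measurable_eq.trans hs.borel_eq_generateFrom_Ioc_mem) (isPiSystem_Ioc_mem s s) ?_
    huniv
  rintro _ ⟨a, ha, b, hb, hab, rfl⟩
  rw [← Iic_sdiff_Iic, measure_sdiff (Iic_subset_Iic.2 hab.le) nullMeasurableSet_Iic
    (measure_ne_top _ _), measure_sdiff (Iic_subset_Iic.2 hab.le) nullMeasurableSet_Iic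
    (measure_ne_top _ _), h a ha, h b hb]

theorem Measure.dense_setOf_forall_measure_singleton_sub_eq_zero (μ : Measure ℝ) [SFinite μ]
    (D : Finset ℝ) : Dense {a | ∀ d ∈ D, μ {a - d} = 0} := by
  have hatoms : {x : ℝ | 0 < μ {x}}.Countable :=
    Measure.countable_meas_pos_of_disjoint_iUnion measurableSet_singleton
      fun x y hxy ↦ disjoint_singleton.2 hxy
  have hcompl : {a | ∀ d ∈ D, μ {a - d} = 0} = (⋃ d ∈ D, (· - d) ⁻¹' {x | 0 < μ {x}})ᶜ := by
    ext a
    simp [pos_iff_ne_zero]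
  rw [hcompl]
  exact (D.countable_toSet.biUnion fun d _ ↦ hatoms.preimage sub_left_injective).dense_compl ℝ

theorem ProbabilityMeasure.tendsto_measure_of_diff_cthickening_eq
    {Ω ι : Type*} [PseudoEMetricSpace Ω] [MeasurableSpace Ω] [OpensMeasurableSpace Ω]
    {L : Filter ι} {μ : ProbabilityMeasure Ω} {μs : ι → ProbabilityMeasure Ω}
    (hμs : Tendsto μs L (𝓝 μ)) {E : ι → Set Ω} {E₀ B : Set Ω}
    (hB : IsClosed B) (hB₀ : (μ : Measure Ω) B = 0) (hfr : frontier E₀ ⊆ B)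
    (hE : ∀ δ > 0, ∀ᶠ i in L, E i \ cthickening δ B = E₀ \ cthickening δ B) :
    Tendsto (fun i ↦ (μs i : Measure Ω) (E i)) L (𝓝 ((μ : Measure Ω) E₀)) := by
  set C : ℝ → Set Ω := fun δ ↦ cthickening δ B
  have hfrC : ∀ δ, frontier E₀ ⊆ C δ := fun δ ↦ hfr.trans (self_subset_cthickening B)
  have le_of_forall_le_add {a b : ENNReal} (h : ∀ δ > 0, a ≤ b + (μ : Measure Ω) (C δ)) :
      a ≤ b := by
    have hC : Tendsto (fun δ ↦ (μ : Measure Ω) (C δ)) (𝓝[>] 0) (𝓝 0) :=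
      hB₀ ▸ (tendsto_measure_cthickening_of_isClosed ⟨1, one_pos, measure_ne_top _ _⟩
        hB).mono_left nhdsWithin_le_nhds
    simpa using ge_of_tendsto (tendsto_const_nhds.add hC) (eventually_nhdsWithin_of_forall h)
  refine tendsto_of_le_liminf_of_limsup_le ?_ ?_
  · refine le_of_forall_le_add fun δ hδ ↦ ?_
    have hopen : IsOpen (E₀ \ C δ) := by
      rw [← union_eq_right.2 (hfrC δ), ← Set.sdiff_sdiff, self_sdiff_frontier]
      exact isOpen_interior.sdiff isClosed_cthickening
    calc (μ : Measure Ω) E₀ ≤ (μ : Measure Ω) (E₀ \ C δ ∪ C δ) :=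
          measure_mono (subset_sdiff_union _ _)
      _ ≤ (μ : Measure Ω) (E₀ \ C δ) + (μ : Measure Ω) (C δ) := measure_union_le _ _
      _ ≤ (L.liminf fun i ↦ (μs i : Measure Ω) (E₀ \ C δ)) + (μ : Measure Ω) (C δ) := by
          gcongr; exact ProbabilityMeasure.le_liminf_measure_open_of_tendsto hμs hopen
      _ ≤ (L.liminf fun i ↦ (μs i : Measure Ω) (E i)) + (μ : Measure Ω) (C δ) := by
          gcongr
          exact liminf_le_liminf ((hE δ hδ).mono fun i hi ↦ measure_mono (hi ▸ sdiff_subset))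
  · refine le_of_forall_le_add fun δ hδ ↦ ?_
    have hclosed : IsClosed (E₀ ∪ C δ) := by
      rw [← union_eq_right.2 (hfrC δ), ← union_assoc, ← closure_eq_self_union_frontier]
      exact isClosed_closure.union isClosed_cthickening
    calc (L.limsup fun i ↦ (μs i : Measure Ω) (E i))
        ≤ L.limsup fun i ↦ (μs i : Measure Ω) (E₀ ∪ C δ) :=
          limsup_le_limsup ((hE δ hδ).mono fun i hi ↦ measure_mono <|
            (subset_sdiff_union _ (C δ)).trans
              (union_subset_union_left _ (hi.trans_subset sdiff_subset)))
      _ ≤ (μ : Measure Ω) (E₀ ∪ C δ) :=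
          ProbabilityMeasure.limsup_measure_closed_le_of_tendsto hμs hclosed
      _ ≤ (μ : Measure Ω) E₀ + (μ : Measure Ω) (C δ) := measure_union_le _ _

theorem ProbabilityMeasure.tendsto_measure_Iic_inter_Ico {ι : Type*} {L : Filter ι}
    {μ : ProbabilityMeasure ℝ} {μs : ι → ProbabilityMeasure ℝ} (hμs : Tendsto μs L (𝓝 μ))
    {s a b : ι → ℝ} {s₀ a₀ b₀ : ℝ} (hs : Tendsto s L (𝓝 s₀)) (ha : Tendsto a L (𝓝 a₀))
    (hb : Tendsto b L (𝓝 b₀)) (hs₀ : (μ : Measure ℝ) {s₀} = 0) (ha₀ : (μ : Measure ℝ) {a₀} = 0)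
    (hb₀ : (μ : Measure ℝ) {b₀} = 0) :
    Tendsto (fun i ↦ (μs i : Measure ℝ) (Iic (s i) ∩ Ico (a i) (b i))) L
      (𝓝 ((μ : Measure ℝ) (Iic s₀ ∩ Ico a₀ b₀))) := by
  have hfrIco : frontier (Ico a₀ b₀) ⊆ {a₀, b₀} := by
    rcases lt_or_ge a₀ b₀ with h | h
    · exact (frontier_Ico h).subset
    · simp [Ico_eq_empty_of_le h]
  refine tendsto_measure_of_diff_cthickening_eq hμs (toFinite _).isClosed
    (measure_union_null hs₀ (measure_union_null ha₀ hb₀))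
    ((frontier_inter_subset _ _).trans (union_subset_union inter_subset_left inter_subset_right
      |>.trans (union_subset_union (frontier_Iic_subset s₀) hfrIco))) fun δ hδ ↦ ?_
  have close {x : ι → ℝ} {x₀ : ℝ} (hx : Tendsto x L (𝓝 x₀)) : ∀ᶠ i in L, |x i - x₀| ≤ δ := by
    simpa only [mem_closedBall, Real.dist_eq] using hx.eventually (closedBall_mem_nhds x₀ hδ)
  filter_upwards [close hs, close ha, close hb] with i using
    Iic_inter_Ico_sdiff_cthickening_eq

/-- The image of `μ` under the interval translation map that moves `[t j, t (j + 1))` by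
`c (j + 1)`, for `j < n`. It is a sum of measures, so no measurability of the map is needed. -/
noncomputable def Measure.itmMap (μ : Measure ℝ) (n : ℕ) (t c : ℕ → ℝ) : Measure ℝ :=
  ∑ j ∈ Finset.range n, (μ.restrict (Ico (t j) (t (j + 1)))).map (· + c (j + 1))

theorem Measure.itmMap_apply (μ : Measure ℝ) (n : ℕ) (t c : ℕ → ℝ) {A : Set ℝ}
    (hA : MeasurableSet A) :
    μ.itmMap n t c A =
      ∑ j ∈ Finset.range n, μ ((· + c (j + 1)) ⁻¹' A ∩ Ico (t j) (t (j + 1))) := by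
  simp only [itmMap, coe_finsetSum, Finset.sum_apply, map_apply (measurable_add_const _) hA,
    restrict_apply (measurable_add_const _ hA)]

theorem Measure.measure_preimage_eq_itmMap {μ : Measure ℝ} {n : ℕ} {t c : ℕ → ℝ}
    (ht : MonotoneOn t (Iic n)) (hμ : μ (Ico (t 0) (t n))ᶜ = 0) {f : ℝ → ℝ}
    (hf : ∀ k, 1 ≤ k → k ≤ n → ∀ x ∈ Ico (t (k - 1)) (t k), f x = x + c k)
    {A : Set ℝ} (hA : MeasurableSet A) : μ (f ⁻¹' A) = μ.itmMap n t c A := by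
  have hcover : μ (⋃ j ∈ Finset.range n, Ico (t j) (t (j + 1)))ᶜ = 0 :=
    measure_mono_null (compl_subset_compl.2 (Ico_subset_biUnion_Ico n t)) hμ
  have hdisj : PairwiseDisjoint (Finset.range n : Set ℕ) fun j ↦ Ico (t j) (t (j + 1)) := by
    have hlt : ∀ {i j}, j < n → i < j →
        Disjoint (Ico (t i) (t (i + 1))) (Ico (t j) (t (j + 1))) := fun hj hij ↦
      disjoint_left.2 fun x hx hx' ↦
        (hx.2.trans_le (ht (mem_Iic.2 (by omega)) (mem_Iic.2 hj.le) hij)).not_ge hx'.1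
    intro i hi j hj hij
    simp only [Finset.coe_range, mem_Iio] at hi hj
    rcases hij.lt_or_gt with h | h
    exacts [hlt hj h, (hlt hi h).symm]
  have hpiece : ∀ j ∈ Finset.range n, f ⁻¹' A ∩ Ico (t j) (t (j + 1)) =
      (· + c (j + 1)) ⁻¹' A ∩ Ico (t j) (t (j + 1)) := by
    intro j hj
    ext x
    refine and_congr_left fun hx ↦ ?_
    rw [mem_preimage, mem_preimage,
      hf (j + 1) (by omega) (by simpa using hj) x (by simpa using hx)]
  rw [itmMap_apply μ n t c hA, ← measure_inter_conull hcover, inter_iUnion₂,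
    iUnion₂_congr hpiece, measure_biUnion_finset (hdisj.mono fun j ↦ inter_subset_right)
      fun j _ ↦ (measurable_add_const _ hA).inter measurableSet_Ico]

theorem ProbabilityMeasure.tendsto_itmMap_Iic {ι : Type*} {L : Filter ι}
    {μ : ProbabilityMeasure ℝ} {μs : ι → ProbabilityMeasure ℝ} (hμs : Tendsto μs L (𝓝 μ))
    {n : ℕ} {t c : ι → ℕ → ℝ} {t₀ c₀ : ℕ → ℝ}
    (ht : ∀ k ≤ n, Tendsto (fun i ↦ t i k) L (𝓝 (t₀ k)))
    (hc : ∀ k, 1 ≤ k → k ≤ n → Tendsto (fun i ↦ c i k) L (𝓝 (c₀ k)))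
    (ht₀ : ∀ k ≤ n, (μ : Measure ℝ) {t₀ k} = 0) {x : ℝ}
    (hx : ∀ k, 1 ≤ k → k ≤ n → (μ : Measure ℝ) {x - c₀ k} = 0) :
    Tendsto (fun i ↦ (μs i : Measure ℝ).itmMap n (t i) (c i) (Iic x)) L
      (𝓝 ((μ : Measure ℝ).itmMap n t₀ c₀ (Iic x))) := by
  simp only [Measure.itmMap_apply _ _ _ _ measurableSet_Iic, preimage_add_const_Iic]
  refine tendsto_finsetSum _ fun j hj ↦ ?_
  have hj : j + 1 ≤ n := Finset.mem_range.1 hj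
  exact tendsto_measure_Iic_inter_Ico hμs (tendsto_const_nhds.sub (hc (j + 1) (by omega) hj))
    (ht j (by omega)) (ht (j + 1) hj) (hx (j + 1) (by omega) hj) (ht₀ j (by omega))
    (ht₀ (j + 1) hj)

theorem ProbabilityMeasure.itmMap_eq_of_tendsto
    {μ : ProbabilityMeasure ℝ} {μs : ℕ → ProbabilityMeasure ℝ} (hμs : Tendsto μs atTop (𝓝 μ))
    {n : ℕ} {t c : ℕ → ℕ → ℝ} {t₀ c₀ : ℕ → ℝ}
    (ht : ∀ k ≤ n, Tendsto (fun m ↦ t m k) atTop (𝓝 (t₀ k)))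
    (hc : ∀ k, 1 ≤ k → k ≤ n → Tendsto (fun m ↦ c m k) atTop (𝓝 (c₀ k)))
    (ht₀ : ∀ k ≤ n, (μ : Measure ℝ) {t₀ k} = 0)
    (hinv : ∀ m, (μs m : Measure ℝ).itmMap n (t m) (c m) = μs m)
    (huniv : (μ : Measure ℝ).itmMap n t₀ c₀ univ = (μ : Measure ℝ) univ) :
    (μ : Measure ℝ).itmMap n t₀ c₀ = μ := by
  set D : Finset ℝ := insert 0 ((Finset.Icc 1 n).image c₀)
  refine (Measure.ext_of_Iic_of_dense (Measure.dense_setOf_forall_measure_singleton_sub_eq_zero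
    (μ : Measure ℝ) D) huniv.symm fun x hx ↦ ?_).symm
  have hx₀ : (μ : Measure ℝ) {x} = 0 := by simpa using hx 0 (Finset.mem_insert_self 0 _)
  have hxc : ∀ k, 1 ≤ k → k ≤ n → (μ : Measure ℝ) {x - c₀ k} = 0 := fun k hk hkn ↦
    hx _ (Finset.mem_insert_of_mem (Finset.mem_image_of_mem _ (Finset.mem_Icc.2 ⟨hk, hkn⟩)))
  refine tendsto_nhds_unique ?_ (tendsto_itmMap_Iic hμs ht hc ht₀ hxc)
  simp only [hinv]
  exact tendsto_measure_of_null_frontier_of_tendsto' hμs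
    (measure_mono_null (frontier_Iic_subset x) hx₀)

end MeasureTheory

theorem itm_limit_of_invariant_measures_general
    (n : ℕ)
    (t c : ℕ → ℕ → ℝ) (S : ℕ → ℝ → ℝ)
    (tstar cstar : ℕ → ℝ) (Sstar : ℝ → ℝ)
    -- each `S m` is an ITM with parameters `t m`, `c m`
    (ht0 : ∀ m, t m 0 = 0) (htn : ∀ m, t m n = 1)
    (htmono : ∀ m, ∀ k, k < n → t m k < t m (k + 1))
    (hS : ∀ m, ∀ k, 1 ≤ k → k ≤ n →
      ∀ x ∈ Ico (t m (k - 1)) (t m k), S m x = x + c m k)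
    -- `Sstar` is an ITM with parameters `tstar`, `cstar`
    (htstar0 : tstar 0 = 0) (htstarn : tstar n = 1)
    (htstarmono : ∀ k, k < n → tstar k < tstar (k + 1))
    (hSstar : ∀ k, 1 ≤ k → k ≤ n →
      ∀ x ∈ Ico (tstar (k - 1)) (tstar k), Sstar x = x + cstar k)
    -- convergence of the parameters
    (htconv : ∀ k, k ≤ n → Tendsto (fun m => t m k) atTop (nhds (tstar k)))
    (hcconv : ∀ k, 1 ≤ k → k ≤ n → Tendsto (fun m => c m k) atTop (nhds (cstar k)))
    -- invariant probability measures `μ m` of `S m`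
    (μ : ℕ → Measure ℝ) (hμprob : ∀ m, IsProbabilityMeasure (μ m))
    (hμsupp : ∀ m, μ m (Ico (0 : ℝ) 1) = 1)
    (hμinv : ∀ m, ∀ A : Set ℝ, MeasurableSet A → μ m (S m ⁻¹' A) = μ m A)
    -- weak-* convergence `μ m → μstar`
    (μstar : Measure ℝ) (hstarprob : IsProbabilityMeasure μstar)
    (hconv : ∀ φ : ℝ → ℝ, Continuous φ →
      Tendsto (fun m => ∫ x, φ x ∂(μ m)) atTop (nhds (∫ x, φ x ∂μstar)))
    -- the limit measure has no atoms at the discontinuity points of `Sstar`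
    (hatoms : ∀ k, k ≤ n → μstar {tstar k} = 0) :
    ∀ A : Set ℝ, MeasurableSet A → μstar (Sstar ⁻¹' A) = μstar A := by
  let ν : ℕ → ProbabilityMeasure ℝ := fun m ↦ ⟨μ m, hμprob m⟩
  let ν₀ : ProbabilityMeasure ℝ := ⟨μstar, hstarprob⟩
  have hν : Tendsto ν atTop (𝓝 ν₀) :=
    ProbabilityMeasure.tendsto_iff_forall_integral_tendsto.2 fun φ ↦ hconv φ φ.continuous
  have hsupp : μstar (Ico 0 1) = 1 := by
    have hfr : μstar (frontier (Ico (0 : ℝ) 1)) = 0 := by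
      rw [frontier_Ico zero_lt_one, ← htstar0, ← htstarn]
      exact measure_union_null (hatoms 0 n.zero_le) (hatoms n le_rfl)
    exact tendsto_nhds_unique
      (ProbabilityMeasure.tendsto_measure_of_null_frontier_of_tendsto' hν hfr)
      (by simp [ν, hμsupp])
  have hpre : ∀ A, MeasurableSet A → μstar (Sstar ⁻¹' A) = μstar.itmMap n tstar cstar A :=
    fun A ↦ Measure.measure_preimage_eq_itmMap (strictMonoOn_Iic_of_lt_succ htstarmono).monotoneOn
      (by rwa [htstar0, htstarn, prob_compl_eq_zero_iff measurableSet_Ico]) hSstar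
  have hconull : ∀ m, μ m (Ico (t m 0) (t m n))ᶜ = 0 := fun m ↦ by
    rw [ht0, htn, prob_compl_eq_zero_iff measurableSet_Ico]
    exact hμsupp m
  have hinv : ∀ m, (μ m).itmMap n (t m) (c m) = μ m := fun m ↦ Measure.ext fun A hA ↦
    (Measure.measure_preimage_eq_itmMap (strictMonoOn_Iic_of_lt_succ (htmono m)).monotoneOn
      (hconull m) (hS m) hA).symm.trans (hμinv m A hA)
  have hlim : μstar.itmMap n tstar cstar = μstar :=
    ProbabilityMeasure.itmMap_eq_of_tendsto hν htconv hcconv hatoms hinv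
      ((hpre univ .univ).symm.trans (congrArg μstar preimage_univ))
  intro A hA
  rw [hpre A hA, hlim]

/-- **Theorem 2 of the paper.** Let `S m` be interval translation maps of
`n` intervals with parameters `t m k`, `c m k` converging (as `m → ∞`) to the parameters
`tstar k`, `cstar k` of an ITM `Sstar`. Let `μ m` be an `S m`-invariant Borel probability
measure, and suppose `μ m` converges weak-* to a probability measure `μstar`. If
`μstar {tstar k} = 0` for every `k`, then `μstar` is `Sstar`-invariant. -/
theorem itm_limit_of_invariant_measures
    (n : ℕ) (hn : 0 < n)
    (t c : ℕ → ℕ → ℝ) (S : ℕ → ℝ → ℝ)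
    (tstar cstar : ℕ → ℝ) (Sstar : ℝ → ℝ)
    -- each `S m` is an ITM with parameters `t m`, `c m`
    (ht0 : ∀ m, t m 0 = 0) (htn : ∀ m, t m n = 1)
    (htmono : ∀ m, ∀ k, k < n → t m k < t m (k + 1))
    (hc : ∀ m, ∀ k, 1 ≤ k → k ≤ n → 0 ≤ t m (k - 1) + c m k ∧ t m k + c m k ≤ 1)
    (hS : ∀ m, ∀ k, 1 ≤ k → k ≤ n →
      ∀ x ∈ Ico (t m (k - 1)) (t m k), S m x = x + c m k)
    -- `Sstar` is an ITM with parameters `tstar`, `cstar`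
    (htstar0 : tstar 0 = 0) (htstarn : tstar n = 1)
    (htstarmono : ∀ k, k < n → tstar k < tstar (k + 1))
    (hcstar : ∀ k, 1 ≤ k → k ≤ n → 0 ≤ tstar (k - 1) + cstar k ∧ tstar k + cstar k ≤ 1)
    (hSstar : ∀ k, 1 ≤ k → k ≤ n →
      ∀ x ∈ Ico (tstar (k - 1)) (tstar k), Sstar x = x + cstar k)
    -- convergence of the parameters
    (htconv : ∀ k, k ≤ n → Tendsto (fun m => t m k) atTop (nhds (tstar k)))
    (hcconv : ∀ k, 1 ≤ k → k ≤ n → Tendsto (fun m => c m k) atTop (nhds (cstar k)))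
    -- invariant probability measures `μ m` of `S m`
    (μ : ℕ → Measure ℝ) (hμprob : ∀ m, IsProbabilityMeasure (μ m))
    (hμsupp : ∀ m, μ m (Ico (0 : ℝ) 1) = 1)
    (hμinv : ∀ m, ∀ A : Set ℝ, MeasurableSet A → μ m (S m ⁻¹' A) = μ m A)
    -- weak-* convergence `μ m → μstar`
    (μstar : Measure ℝ) (hstarprob : IsProbabilityMeasure μstar)
    (hconv : ∀ φ : ℝ → ℝ, Continuous φ →
      Tendsto (fun m => ∫ x, φ x ∂(μ m)) atTop (nhds (∫ x, φ x ∂μstar)))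
    -- the limit measure has no atoms at the discontinuity points of `Sstar`
    (hatoms : ∀ k, k ≤ n → μstar {tstar k} = 0) :
    ∀ A : Set ℝ, MeasurableSet A → μstar (Sstar ⁻¹' A) = μstar A :=
  itm_limit_of_invariant_measures_general n t c S tstar cstar Sstar ht0 htn htmono hS htstar0
    htstarn htstarmono hSstar htconv hcconv μ hμprob hμsupp hμinv μstar hstarprob hconv hatoms
end

section
/- Let λ ∈ (−1,1) and α ∈ ℝ, and let f be the map on L = ℝ × [−1,1] given by f(x,s) = (λx + αs, Ψ(s + (λx + αs) − x)), where Ψ(τ) = τ if |τ| ≤ 1 and Ψ(τ) = 0 otherwise. Then every trajectory of f is bounded: for each initial point (x₀,s₀) ∈ L, the sequence (xₙ,sₙ) = fⁿ(x₀,s₀) is bounded in ℝ². -/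
open Set

/-- The cut-off function `Ψ` for the interval `[-1,1]`. -/
noncomputable def Psi : ℝ → ℝ := fun τ => if |τ| ≤ 1 then τ else 0

/-- The risk management map `f(x,s) = (λx + αs, Ψ(s + (λx + αs) - x))`. -/
noncomputable def riskMap (lam a : ℝ) : ℝ × ℝ → ℝ × ℝ :=
  fun p => (lam * p.1 + a * p.2, Psi (p.2 + (lam * p.1 + a * p.2) - p.1))

lemma abs_Psi_le_one (τ : ℝ) : |Psi τ| ≤ 1 := by
  unfold Psi
  split
  · assumption
  · simp

/-- **Lemma 5, first part.** For `λ ∈ (-1,1)` and `α ∈ ℝ`, every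
trajectory of the risk management map starting in `L = ℝ × [-1,1]` is bounded. -/
theorem riskMap_trajectories_bounded
    (lam a : ℝ) (hlam : lam ∈ Ioo (-1 : ℝ) 1) :
    ∀ x₀ s₀ : ℝ, s₀ ∈ Icc (-1 : ℝ) 1 →
      ∃ C : ℝ, ∀ m : ℕ, ‖(riskMap lam a)^[m] (x₀, s₀)‖ ≤ C := by
  intro x₀ s₀ hs₀
  obtain ⟨h1, h2⟩ := hlam
  have hl : |lam| < 1 := abs_lt.mpr ⟨h1, h2⟩
  have hpos : (0:ℝ) < 1 - |lam| := by linarith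
  set B := max |x₀| (|a| / (1 - |lam|)) with hB
  have hBx : |x₀| ≤ B := le_max_left _ _
  have hBa : |a| ≤ (1 - |lam|) * B := by
    have := le_max_right |x₀| (|a| / (1 - |lam|))
    rw [div_le_iff₀ hpos] at this
    linarith [this]
  have hB0 : 0 ≤ B := le_trans (abs_nonneg _) hBx
  have key : ∀ m, |((riskMap lam a)^[m] (x₀, s₀)).1| ≤ B ∧
      |((riskMap lam a)^[m] (x₀, s₀)).2| ≤ 1 := by
    intro m
    induction m with
    | zero =>
      refine ⟨hBx, abs_le.mpr ⟨hs₀.1, hs₀.2⟩⟩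
    | succ n ih =>
      rw [Function.iterate_succ_apply']
      obtain ⟨hx, hs⟩ := ih
      set p := (riskMap lam a)^[n] (x₀, s₀)
      constructor
      · show |lam * p.1 + a * p.2| ≤ B
        calc |lam * p.1 + a * p.2| ≤ |lam * p.1| + |a * p.2| := abs_add_le _ _
          _ = |lam| * |p.1| + |a| * |p.2| := by rw [abs_mul, abs_mul]
          _ ≤ |lam| * B + |a| * 1 := by
              have h1 := mul_le_mul_of_nonneg_left hx (abs_nonneg lam)
              have h2 := mul_le_mul_of_nonneg_left hs (abs_nonneg a)
              linarith
          _ ≤ B := by nlinarith [abs_nonneg lam, abs_nonneg a]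
      · exact abs_Psi_le_one _
  refine ⟨max B 1, fun m => ?_⟩
  obtain ⟨hx, hs⟩ := key m
  rw [Prod.norm_def]
  simp only [Real.norm_eq_abs]
  exact max_le (le_trans hx (le_max_left _ _)) (le_trans hs (le_max_right _ _))
end

section
/- Let λ ∈ (−1,1), α ∈ ℝ, β = λ + α with β ∈ (−1,1), and let f be the map on L = ℝ × [−1,1] given by f(x,s) = (λx + αs, Ψ(s + (λx + αs) − x)), where Ψ(τ) = τ if |τ| ≤ 1 and Ψ(τ) = 0 otherwise. Then every fixed point (x*, s*) of f with |s*| < 1 is Lyapunov stable: for every ε > 0 there exists δ > 0 such that any trajectory of f starting within distance δ of (x*, s*) remains within distance ε of (x*, s*) for all n ≥ 0. -/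
open Set

/-- **Lemma 6, stability part.** For `λ ∈ (-1,1)` and `β = λ + α ∈ (-1,1)`,
every fixed point `(x*, s*)` of the risk management map with `|s*| < 1` is Lyapunov
stable: trajectories starting in `L = ℝ × [-1,1]` close to `(x*, s*)` stay close. -/
theorem riskMap_interior_fixed_points_stable
    (lam a : ℝ) (hlam : lam ∈ Ioo (-1 : ℝ) 1) (hbeta : lam + a ∈ Ioo (-1 : ℝ) 1)
    (xstar sstar : ℝ) (hs : |sstar| < 1) (hfix : xstar = a * sstar / (1 - lam)) :
    ∀ ε > (0 : ℝ), ∃ δ > (0 : ℝ), ∀ x₀ s₀ : ℝ, s₀ ∈ Icc (-1 : ℝ) 1 →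
      dist (x₀, s₀) (xstar, sstar) < δ →
      ∀ m : ℕ, dist ((riskMap lam a)^[m] (x₀, s₀)) (xstar, sstar) < ε := by
  obtain ⟨hl1, hl2⟩ := hlam
  obtain ⟨hb1, hb2⟩ := hbeta
  intro ε hε
  set b := lam + a with hbdef
  have hb1' : (0:ℝ) < 1 - b := by simp only [hbdef]; linarith
  have hbabs : |b| ≤ 1 := by rw [abs_le]; constructor <;> [linarith; linarith]
  set K := |a| / (1 - b) with hKdef
  have hK0 : 0 ≤ K := div_nonneg (abs_nonneg a) hb1'.le
  have hmin : 0 < min ε (1 - |sstar|) := lt_min hε (by linarith)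
  set δ := min ε (1 - |sstar|) / (4 + 4*K) with hδdef
  have hδ0 : 0 < δ := div_pos hmin (by linarith)
  have hδmul : (4 + 4*K) * δ = min ε (1 - |sstar|) := by
    rw [hδdef]; field_simp
  have hkey : (3 + 4*K) * δ < min ε (1 - |sstar|) := by
    rw [← hδmul]; nlinarith
  refine ⟨δ, hδ0, ?_⟩
  intro x₀ s₀ _ hd m
  rw [Prod.dist_eq] at hd
  have hdx : |x₀ - xstar| < δ := by
    have := lt_of_le_of_lt (le_max_left _ _) hd
    simpa [Real.dist_eq] using this
  have hds : |s₀ - sstar| < δ := by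
    have := lt_of_le_of_lt (le_max_right _ _) hd
    simpa [Real.dist_eq] using this
  set c := s₀ - x₀ with hcdef
  set cst := sstar - xstar with hcstdef
  set xh := a * c / (1 - b) with hxhdef
  have hxs : xstar * (1 - b) = a * cst := by
    have hl : (1:ℝ) - lam ≠ 0 := by linarith
    have h1 : xstar * (1 - lam) = a * sstar := by
      rw [hfix]; field_simp
    rw [hcstdef, hbdef]; nlinarith [h1]
  have hccst : |c - cst| ≤ 2*δ := by
    have : c - cst = (s₀ - sstar) - (x₀ - xstar) := by
      rw [hcdef, hcstdef]; ring
    rw [this]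
    calc |(s₀ - sstar) - (x₀ - xstar)| ≤ |s₀ - sstar| + |x₀ - xstar| := abs_sub _ _
      _ ≤ 2*δ := by linarith
  have hxhx : |xh - xstar| ≤ 2*K*δ := by
    have heq : xh - xstar = a * (c - cst) / (1 - b) := by
      rw [hxhdef]; field_simp; linear_combination -hxs
    rw [heq, abs_div, abs_mul, abs_of_pos hb1']
    calc |a| * |c - cst| / (1 - b) ≤ |a| * (2*δ) / (1 - b) := by
          gcongr
      _ = 2*K*δ := by rw [hKdef]; ring
  have he0 : |x₀ - xh| ≤ δ + 2*K*δ := by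
    calc |x₀ - xh| = |(x₀ - xstar) + (xstar - xh)| := by ring_nf
      _ ≤ |x₀ - xstar| + |xstar - xh| := abs_add_le _ _
      _ ≤ δ + 2*K*δ := by rw [abs_sub_comm xstar xh]; linarith
  have hxheq : (1 - b) * xh = a * c := by
    rw [hxhdef]; field_simp
  have hstar : sstar = xstar + cst := by rw [hcstdef]; ring
  -- main invariant
  have key : ∀ n : ℕ, ((riskMap lam a)^[n] (x₀, s₀)).2 = ((riskMap lam a)^[n] (x₀, s₀)).1 + c
      ∧ |((riskMap lam a)^[n] (x₀, s₀)).1 - xh| ≤ δ + 2*K*δ := by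
    intro n
    induction n with
    | zero => exact ⟨by simp [hcdef], by simpa using he0⟩
    | succ n ih =>
      obtain ⟨ih1, ih2⟩ := ih
      set q := (riskMap lam a)^[n] (x₀, s₀) with hq
      rw [Function.iterate_succ_apply']
      have hy : lam * q.1 + a * q.2 = b * q.1 + a * c := by
        rw [ih1, hbdef]; ring
      have hyxh : (lam * q.1 + a * q.2) - xh = b * (q.1 - xh) := by
        have hbne : (1:ℝ) - b ≠ 0 := ne_of_gt hb1'
        rw [hy, hxhdef]; field_simp; ring
      have hybd : |(lam * q.1 + a * q.2) - xh| ≤ δ + 2*K*δ := by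
        rw [hyxh, abs_mul]
        calc |b| * |q.1 - xh| ≤ 1 * |q.1 - xh| :=
              mul_le_mul_of_nonneg_right hbabs (abs_nonneg _)
          _ ≤ δ + 2*K*δ := by rw [one_mul]; exact ih2
      have harg : q.2 + (lam * q.1 + a * q.2) - q.1 = (lam * q.1 + a * q.2) + c := by
        rw [ih1]; ring
      have hsbd : |((lam * q.1 + a * q.2) + c) - sstar| < 1 - |sstar| := by
        have hdec : ((lam * q.1 + a * q.2) + c) - sstar
            = ((lam * q.1 + a * q.2) - xh) + (xh - xstar) + (c - cst) := by
          rw [hstar]; ring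
        rw [hdec]
        calc |((lam * q.1 + a * q.2) - xh) + (xh - xstar) + (c - cst)|
            ≤ |((lam * q.1 + a * q.2) - xh) + (xh - xstar)| + |c - cst| := abs_add_le _ _
          _ ≤ |(lam * q.1 + a * q.2) - xh| + |xh - xstar| + |c - cst| := by
              have := abs_add_le ((lam * q.1 + a * q.2) - xh) (xh - xstar); linarith
          _ ≤ (δ + 2*K*δ) + 2*K*δ + 2*δ := by linarith
          _ = (3 + 4*K) * δ := by ring
          _ < min ε (1 - |sstar|) := hkey
          _ ≤ 1 - |sstar| := min_le_right _ _
      have hPsi : Psi (q.2 + (lam * q.1 + a * q.2) - q.1) = (lam * q.1 + a * q.2) + c := by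
        rw [harg, Psi, if_pos]
        have h1 : |(lam * q.1 + a * q.2) + c| ≤ |((lam * q.1 + a * q.2) + c) - sstar| + |sstar| := by
          have := abs_add_le (((lam * q.1 + a * q.2) + c) - sstar) sstar
          simpa using this
        linarith
      constructor
      · show Psi _ = (lam * q.1 + a * q.2) + c
        exact hPsi
      · show |(lam * q.1 + a * q.2) - xh| ≤ δ + 2*K*δ
        exact hybd
  obtain ⟨k1, k2⟩ := key m
  set q := (riskMap lam a)^[m] (x₀, s₀) with hq
  rw [Prod.dist_eq]
  apply max_lt
  · rw [Real.dist_eq]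
    calc |q.1 - xstar| = |(q.1 - xh) + (xh - xstar)| := by ring_nf
      _ ≤ |q.1 - xh| + |xh - xstar| := abs_add_le _ _
      _ ≤ (δ + 2*K*δ) + 2*K*δ := by linarith
      _ ≤ (3 + 4*K) * δ := by nlinarith
      _ < min ε (1 - |sstar|) := hkey
      _ ≤ ε := min_le_left _ _
  · rw [Real.dist_eq, k1]
    calc |q.1 + c - sstar| = |(q.1 - xh) + (xh - xstar) + (c - cst)| := by rw [hstar]; ring_nf
      _ ≤ |(q.1 - xh) + (xh - xstar)| + |c - cst| := abs_add_le _ _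
      _ ≤ |q.1 - xh| + |xh - xstar| + |c - cst| := by
          have := abs_add_le (q.1 - xh) (xh - xstar); linarith
      _ ≤ (δ + 2*K*δ) + 2*K*δ + 2*δ := by linarith
      _ = (3 + 4*K) * δ := by ring
      _ < min ε (1 - |sstar|) := hkey
      _ ≤ ε := min_le_left _ _
end

section
/- Let λ ∈ (−1,1), α ∈ ℝ, β = λ + α, and let f be the map on L = ℝ × [−1,1] given by f(x,s) = (λx + αs, Ψ(s + (λx + αs) − x)), where Ψ(τ) = τ if |τ| ≤ 1 and Ψ(τ) = 0 otherwise. Let Π = {(x,s) : |x − s| ≤ |α/(1−λ) − 1|, |s| ≤ 1}. Suppose (x₀,s₀) ∈ Π, set p₀ = x₀ − s₀, and assume either (−1 < β < 0 and |βx₀ − (α+1)p₀| ≤ 1) or (0 ≤ β < 1). Then the trajectory (xₙ,sₙ) = fⁿ(x₀,s₀) satisfies xₙ − sₙ = p₀ for all n ≥ 0, and (xₙ,sₙ) converges as n → ∞ to the fixed point (x*, s*) = (−αp₀/(1−β), −(1−λ)p₀/(1−β)), which satisfies x* − s* = p₀. -/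
open Set Filter

private lemma aux_combo (c u v : ℝ) (hc0 : 0 ≤ c) (hc1 : c ≤ 1)
    (hu : |u| ≤ 1) (hv : |v| ≤ 1) : |c * u + (1 - c) * v| ≤ 1 := by
  rw [abs_le] at hu hv ⊢
  constructor <;> nlinarith [hu.1, hu.2, hv.1, hv.2]

/-- **Lemma 8.** Let `λ ∈ (-1,1)`, `β = λ + α`, and let
`Π = {(x,s) : |x - s| ≤ |α/(1-λ) - 1|, |s| ≤ 1}`. If `(x₀,s₀) ∈ Π`, `p₀ = x₀ - s₀`,
and either `-1 < β < 0` with `|βx₀ - (α+1)p₀| ≤ 1`, or `0 ≤ β < 1`, then the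
trajectory satisfies `xₙ - sₙ = p₀` for all `n` and converges to the fixed point
`(x*, s*) = (-αp₀/(1-β), -(1-λ)p₀/(1-β))`, which satisfies `x* - s* = p₀`. -/
theorem riskMap_parallelogram_convergence
    (lam a b : ℝ) (hlam : lam ∈ Ioo (-1 : ℝ) 1) (hb : b = lam + a)
    (x₀ s₀ p₀ : ℝ) (hp₀ : p₀ = x₀ - s₀)
    (hPi : |x₀ - s₀| ≤ |a / (1 - lam) - 1| ∧ |s₀| ≤ 1)
    (hcase : (-1 < b ∧ b < 0 ∧ |b * x₀ - (a + 1) * p₀| ≤ 1) ∨ (0 ≤ b ∧ b < 1))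
    (xstar sstar : ℝ)
    (hxstar : xstar = -(a * p₀) / (1 - b)) (hsstar : sstar = -((1 - lam) * p₀) / (1 - b)) :
    (∀ m : ℕ, ((riskMap lam a)^[m] (x₀, s₀)).1 - ((riskMap lam a)^[m] (x₀, s₀)).2 = p₀) ∧
    Tendsto (fun m : ℕ => (riskMap lam a)^[m] (x₀, s₀)) atTop (nhds (xstar, sstar)) ∧
    riskMap lam a (xstar, sstar) = (xstar, sstar) ∧
    xstar - sstar = p₀ := by
  obtain ⟨hlam1, hlam2⟩ := hlam
  obtain ⟨hp_bound, hs0⟩ := hPi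
  have hb1 : b < 1 := by rcases hcase with ⟨_, h, _⟩ | ⟨_, h⟩ <;> linarith
  have hbm1 : -1 < b := by rcases hcase with ⟨h, _, _⟩ | ⟨h, _⟩ <;> linarith
  have habs : |b| < 1 := abs_lt.2 ⟨hbm1, hb1⟩
  have h1lam : (0:ℝ) < 1 - lam := by linarith
  have h1b : (0:ℝ) < 1 - b := by linarith
  -- the bound on p₀
  have hfrac : a / (1 - lam) - 1 = (b - 1) / (1 - lam) := by
    field_simp
    linarith [hb]
  have hp0_bound : (1 - lam) * |p₀| ≤ 1 - b := by
    have h : |a / (1 - lam) - 1| = (1 - b) / (1 - lam) := by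
      rw [hfrac, abs_div, abs_of_pos h1lam, abs_of_neg (by linarith : b - 1 < 0)]
      ring_nf
    rw [hp₀]
    have := hp_bound
    rw [h] at this
    rw [le_div_iff₀ h1lam] at this
    nlinarith [this]
  -- key identity
  have hkey : (1 - b) * sstar = -((1 - lam) * p₀) := by
    rw [hsstar]; field_simp
  have hsstar_abs : |sstar| ≤ 1 := by
    have : (1 - b) * |sstar| = (1 - lam) * |p₀| := by
      have := congrArg abs hkey
      rw [abs_mul, abs_of_pos h1b, abs_neg, abs_mul, abs_of_pos h1lam] at this
      exact this
    nlinarith [hp0_bound, abs_nonneg sstar]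
  have hxkey : (1 - b) * xstar = -(a * p₀) := by
    rw [hxstar]; field_simp
  have hxs : xstar - sstar = p₀ := by
    have h : (1 - b) * (xstar - sstar) = (1 - b) * p₀ := by
      rw [mul_sub, hxkey, hkey]; linear_combination p₀ * hb
    exact mul_left_cancel₀ (ne_of_gt h1b) h
  -- uncut trajectory
  set t : ℕ → ℝ := fun n => b ^ n * (s₀ - sstar) + sstar with ht_def
  have ht1 : |b * s₀ + (1 - b) * sstar| ≤ 1 := by
    rcases hcase with ⟨_, hbneg, hyp⟩ | ⟨hb0, _⟩
    · have : b * x₀ - (a + 1) * p₀ = b * s₀ + (1 - b) * sstar := by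
        have hx0 : x₀ = s₀ + p₀ := by linarith [hp₀]
        rw [hx0]
        have : (b - a - 1) * p₀ = (1 - b) * sstar := by
          rw [hkey]; linear_combination p₀ * hb
        linarith [this]
      rwa [this] at hyp
    · exact aux_combo b s₀ sstar hb0 (le_of_lt hb1) hs0 hsstar_abs
  have hpow_le : ∀ m : ℕ, (b ^ m) ^ 2 ≤ 1 := by
    intro m
    have : |b ^ m| ≤ 1 := by
      rw [abs_pow]; exact pow_le_one₀ (abs_nonneg b) (le_of_lt habs)
    nlinarith [this, abs_nonneg (b ^ m), sq_abs (b ^ m)]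
  have ht : ∀ n, |t n| ≤ 1 := by
    intro n
    rcases Nat.even_or_odd n with ⟨m, hm⟩ | ⟨m, hm⟩
    · have heq : t n = (b ^ m) ^ 2 * s₀ + (1 - (b ^ m) ^ 2) * sstar := by
        simp only [ht_def, hm]
        rw [pow_add]; ring
      rw [heq]
      exact aux_combo _ _ _ (sq_nonneg _) (hpow_le m) hs0 hsstar_abs
    · have heq : t n = (b ^ m) ^ 2 * (b * s₀ + (1 - b) * sstar)
          + (1 - (b ^ m) ^ 2) * sstar := by
        simp only [ht_def, hm]
        rw [pow_succ, pow_mul]; ring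
      rw [heq]
      exact aux_combo _ _ _ (sq_nonneg _) (hpow_le m) ht1 hsstar_abs
  -- trajectory formula
  have hrec : ∀ n, t (n + 1) = b * t n + (1 - b) * sstar := by
    intro n; simp only [ht_def, pow_succ]; ring
  have htraj : ∀ n, (riskMap lam a)^[n] (x₀, s₀) = (t n + p₀, t n) := by
    intro n
    induction n with
    | zero =>
      simp only [Function.iterate_zero, id_eq, ht_def, pow_zero, one_mul]
      rw [Prod.mk.injEq]
      constructor <;> linarith [hp₀]
    | succ n ih =>
      rw [Function.iterate_succ_apply', ih]
      have hfst : lam * (t n + p₀) + a * (t n) = t (n + 1) + p₀ := by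
        rw [hrec n, hkey]; linear_combination (-(t n)) * hb
      have harg : t n + (lam * (t n + p₀) + a * (t n)) - (t n + p₀) = t (n + 1) := by
        rw [hrec n, hkey]; linear_combination (-(t n)) * hb
      show (lam * (t n + p₀) + a * (t n),
          Psi (t n + (lam * (t n + p₀) + a * (t n)) - (t n + p₀))) = (t (n + 1) + p₀, t (n + 1))
      rw [harg, hfst]
      simp only [Psi]
      rw [if_pos (ht (n + 1))]
  refine ⟨?_, ?_, ?_, hxs⟩
  · intro m; rw [htraj m]; simp
  · have htend : Tendsto t atTop (nhds sstar) := by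
      have h0 : Tendsto (fun n : ℕ => b ^ n) atTop (nhds 0) :=
        tendsto_pow_atTop_nhds_zero_of_abs_lt_one habs
      have := (h0.mul_const (s₀ - sstar)).add_const sstar
      simpa using this
    have : Tendsto (fun n : ℕ => ((t n + p₀ : ℝ), t n)) atTop
        (nhds (sstar + p₀, sstar)) :=
      (htend.add_const p₀).prodMk_nhds htend
    have hx : sstar + p₀ = xstar := by linarith [hxs]
    rw [hx] at this
    exact this.congr (fun n => (htraj n).symm)
  · have hx0 : xstar = sstar + p₀ := by linarith [hxs]
    have hfst : lam * xstar + a * sstar = xstar := by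
      rw [hx0]
      linear_combination (-sstar) * hb - hkey
    have harg : sstar + (lam * xstar + a * sstar) - xstar = sstar := by
      rw [hfst]; ring
    show (lam * xstar + a * sstar,
        Psi (sstar + (lam * xstar + a * sstar) - xstar)) = (xstar, sstar)
    rw [harg, hfst]
    simp only [Psi]
    rw [if_pos hsstar_abs]
end

section
/- Let λ ∈ (−1,0), α ∈ ℝ, β = λ + α > 1, and let f be the map on L = ℝ × [−1,1] given by f(x,s) = (λx + αs, Ψ(s + (λx + αs) − x)), where Ψ(τ) = τ if |τ| ≤ 1 and Ψ(τ) = 0 otherwise. Then for every point (x₀,s₀) ∈ L not belonging to the fixed-point segment EF = {(x,s) : x = αs/(1−λ), −1 ≤ s ≤ 1}, there exists k ∈ ℕ such that the s-coordinate of f^k(x₀,s₀) equals 0. -/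
open Set

/-!
While `Ψ` does not cut off, the quantity `D = (1 - λ)x - αs`, which vanishes exactly on the
line of fixed points, is multiplied by `β = λ + α` at every step, and the jump of `s` in one
step is `-D`. Off that line `D ≠ 0`, so `|D|` eventually exceeds `2`; but `s` stays in
`[-1, 1]`, so a jump of size more than `2` is impossible. Hence `Ψ` must cut off, i.e. `s`
becomes `0`.
-/

theorem Psi_mem_Icc (τ : ℝ) : Psi τ ∈ Icc (-1 : ℝ) 1 := by
  unfold Psi
  split_ifs with h
  · exact abs_le.mp h
  · norm_num

theorem Psi_eq_self_of_ne_zero {τ : ℝ} (h : Psi τ ≠ 0) : Psi τ = τ := by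
  unfold Psi at h ⊢
  split_ifs at h ⊢
  · rfl
  · exact absurd rfl h

noncomputable def fixedLineDefect (lam a : ℝ) (p : ℝ × ℝ) : ℝ := (1 - lam) * p.1 - a * p.2

section

variable {lam a : ℝ} {p : ℝ × ℝ}

theorem fixedLineDefect_eq_zero_iff (hlam : lam ≠ 1) :
    fixedLineDefect lam a p = 0 ↔ p.1 = a * p.2 / (1 - lam) := by
  have : 1 - lam ≠ 0 := sub_ne_zero.mpr hlam.symm
  rw [eq_div_iff this, fixedLineDefect, sub_eq_zero, mul_comm]

theorem riskMap_snd_mem_Icc (p : ℝ × ℝ) : (riskMap lam a p).2 ∈ Icc (-1 : ℝ) 1 :=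
  Psi_mem_Icc _

theorem iterate_riskMap_snd_mem_Icc (hp : p.2 ∈ Icc (-1 : ℝ) 1) :
    ∀ n, ((riskMap lam a)^[n] p).2 ∈ Icc (-1 : ℝ) 1
  | 0 => hp
  | n + 1 => by
    rw [Function.iterate_succ_apply']
    exact riskMap_snd_mem_Icc _

theorem riskMap_snd_sub_of_ne_zero (h : (riskMap lam a p).2 ≠ 0) :
    (riskMap lam a p).2 - p.2 = -fixedLineDefect lam a p := by
  have hs : (riskMap lam a p).2 = p.2 + (lam * p.1 + a * p.2) - p.1 :=
    Psi_eq_self_of_ne_zero h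
  rw [hs, fixedLineDefect]
  ring

theorem fixedLineDefect_riskMap_of_ne_zero (h : (riskMap lam a p).2 ≠ 0) :
    fixedLineDefect lam a (riskMap lam a p) = (lam + a) * fixedLineDefect lam a p := by
  have hs := riskMap_snd_sub_of_ne_zero h
  simp only [fixedLineDefect, riskMap] at hs ⊢
  linear_combination (-a) * hs

theorem abs_fixedLineDefect_le_two (hp : p.2 ∈ Icc (-1 : ℝ) 1)
    (h : (riskMap lam a p).2 ≠ 0) : |fixedLineDefect lam a p| ≤ 2 := by
  have hjump := riskMap_snd_sub_of_ne_zero h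
  have hs' := riskMap_snd_mem_Icc (lam := lam) (a := a) p
  rw [abs_le]
  constructor <;> linarith [hp.1, hp.2, hs'.1, hs'.2]

theorem fixedLineDefect_iterate_riskMap
    (h : ∀ k, ((riskMap lam a)^[k + 1] p).2 ≠ 0) :
    ∀ n, fixedLineDefect lam a ((riskMap lam a)^[n] p) = (lam + a) ^ n * fixedLineDefect lam a p
  | 0 => by simp
  | n + 1 => by
    have hn := h n
    rw [Function.iterate_succ_apply'] at hn ⊢
    rw [fixedLineDefect_riskMap_of_ne_zero hn, fixedLineDefect_iterate_riskMap h n, pow_succ]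
    ring

end

/-- **Theorem 3, part 1.** Let `λ ∈ (-1,0)` and `β = λ + α > 1`. Then
every point of `L = ℝ × [-1,1]` outside the fixed-point segment
`EF = {(x,s) : x = αs/(1-λ), -1 ≤ s ≤ 1}` reaches the line `s = 0` in finitely many
iterations of the risk management map. -/
theorem riskMap_reaches_zero_section
    (lam a : ℝ) (hlam : lam ∈ Ioo (-1 : ℝ) 0) (hbeta : 1 < lam + a) :
    ∀ x₀ s₀ : ℝ, s₀ ∈ Icc (-1 : ℝ) 1 → x₀ ≠ a * s₀ / (1 - lam) →
      ∃ k : ℕ, ((riskMap lam a)^[k] (x₀, s₀)).2 = 0 := by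
  intro x₀ s₀ hs₀ hx₀
  by_contra! hne
  set D := fixedLineDefect lam a (x₀, s₀)
  have hD : 0 < |D| :=
    abs_pos.mpr fun h => hx₀ ((fixedLineDefect_eq_zero_iff (by linarith [hlam.2])).mp h)
  obtain ⟨n, hn⟩ := pow_unbounded_of_one_lt (2 / |D|) hbeta
  have hbound : |fixedLineDefect lam a ((riskMap lam a)^[n] (x₀, s₀))| ≤ 2 := by
    refine abs_fixedLineDefect_le_two (iterate_riskMap_snd_mem_Icc hs₀ n) ?_
    rw [← Function.iterate_succ_apply' (riskMap lam a)]
    exact hne (n + 1)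
  rw [fixedLineDefect_iterate_riskMap (fun k => hne (k + 1)), abs_mul, abs_pow,
    abs_of_pos (by linarith)] at hbound
  linarith [(div_lt_iff₀ hD).mp hn]
end

section
/- Let λ, α ∈ ℝ with β = λ + α ≠ 1, and let A be the 2×2 real matrix with rows (λ, α) and (λ−1, α+1). Then for every n ∈ ℕ, Aⁿ = (1/(β−1)) · M, where M is the 2×2 matrix with rows (α − (1−λ)βⁿ, αβⁿ − α) and ((λ−1)(βⁿ − 1), αβⁿ − 1 + λ). -/
/-- **formula (8) of the paper.** For `β = λ + α ≠ 1` and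
`A = [[λ, α], [λ-1, α+1]]`, one has for every `n`:
`Aⁿ = (1/(β-1)) · [[α - (1-λ)βⁿ, αβⁿ - α], [(λ-1)(βⁿ-1), αβⁿ - 1 + λ]]`. -/
theorem riskMatrix_pow (lam a : ℝ) (hb : lam + a ≠ 1) :
    ∀ n : ℕ,
      (!![lam, a; lam - 1, a + 1] : Matrix (Fin 2) (Fin 2) ℝ) ^ n =
        ((lam + a) - 1)⁻¹ •
          !![a - (1 - lam) * (lam + a) ^ n,       a * (lam + a) ^ n - a;
             (lam - 1) * ((lam + a) ^ n - 1),     a * (lam + a) ^ n - 1 + lam] := by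
  have hb' : (lam + a) - 1 ≠ 0 := sub_ne_zero.mpr hb
  intro n
  induction n with
  | zero =>
      ext i j
      fin_cases i <;> fin_cases j <;>
        simp [Matrix.smul_apply, Matrix.one_apply] <;> field_simp <;> ring
  | succ n ih =>
      rw [pow_succ, ih]
      ext i j
      fin_cases i <;> fin_cases j <;>
        · simp [Matrix.mul_apply, Fin.sum_univ_two, Matrix.smul_apply]
          field_simp
          ring
end

section
/- Let λ < 1 and β > 1 be real numbers, set α = β − λ, and let A be the 2×2 real matrix with rows (λ, α) and (λ−1, α+1). For k ∈ ℕ, k ≥ 1, define q_k = (β−1)/((1−λ)(β^k − 1)). Then A^k applied to the column vector (q_k, 0) equals the column vector (q_k − 1, −1). -/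
open Matrix
/-- **formula (9) of the paper.** For `λ < 1 < β`, `α = β - λ`,
`A = [[λ, α], [λ-1, α+1]]` and `q_k = (β-1)/((1-λ)(β^k - 1))` (`k ≥ 1`), one has
`A^k (q_k, 0)ᵀ = (q_k - 1, -1)ᵀ`. -/
theorem riskMatrix_pow_qk (lam b : ℝ) (hlam : lam < 1) (hb : 1 < b)
    (a : ℝ) (ha : a = b - lam) (k : ℕ) (hk : 1 ≤ k) :
    (!![lam, a; lam - 1, a + 1] : Matrix (Fin 2) (Fin 2) ℝ) ^ k *ᵥ
        ![(b - 1) / ((1 - lam) * (b ^ k - 1)), 0] =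
      ![(b - 1) / ((1 - lam) * (b ^ k - 1)) - 1, -1] := by
  subst ha
  set S : ℕ → ℝ := fun n => ∑ i ∈ Finset.range n, b ^ i with hS
  have key : ∀ n : ℕ, (!![lam, b - lam; lam - 1, b - lam + 1] : Matrix (Fin 2) (Fin 2) ℝ) ^ n
      = !![1 + S n * (lam - 1), S n * (b - lam); S n * (lam - 1), 1 + S n * (b - lam)] := by
    intro n
    induction n with
    | zero => simp [hS, Matrix.one_fin_two]
    | succ n ih =>
      have hs : S (n + 1) = b * S n + 1 := by
        simp only [hS]; rw [geom_sum_succ]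
      rw [pow_succ, ih, hs, Matrix.mul_fin_two]
      congr 1 <;> ring
  rw [key k]
  have hl : (1 : ℝ) - lam ≠ 0 := by linarith
  have hbk : b ^ k - 1 ≠ 0 := by
    have : (1:ℝ) < b ^ k := one_lt_pow₀ hb (by omega)
    linarith
  have hgs : S k * (b - 1) = b ^ k - 1 := by
    simpa [hS] using geom_sum_mul b k
  funext i
  fin_cases i <;>
    simp [Matrix.mulVec, dotProduct, Fin.sum_univ_two] <;>
    field_simp <;>
    nlinarith [hgs, sq_nonneg (S k)]
end

section
/- Let λ ∈ (−1,0) and β > 1. For k ≥ 1 set q_k = (β−1)/((1−λ)(β^k − 1)), and define T : (0,∞) → (0,∞) by T(x) = −λx for x > q_1 and T(x) = ((β − λq_k)/q_k) · x for x ∈ (q_{k+1}, q_k], k ≥ 1. Set μ̄ = −λ/(1−λ) and ν̄ = β − λ/(1−λ). Then the segment [μ̄, ν̄] is positively invariant under T: T(x) ∈ [μ̄, ν̄] for every x ∈ [μ̄, ν̄]. -/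
open Set Filter Topology

/-!
On `(q₁, ∞)` the map contracts by `-λ ∈ (0, 1)`, so it moves a point of `[μ̄, ν̄]` down, but
not below `-λ q₁ = μ̄`. On `(q_{k+1}, q_k]` it is increasing linear, so its image lies between
`T(q_{k+1}⁺) = χ_k q_{k+1}` and `T(q_k) = β - λ q_k ≤ β - λ q₁ = ν̄`. The lower end is controlled
by the recurrence `1/q_{k+1} = β/q_k + (1 - λ)`, which gives
`χ_k q_{k+1} = (β q_{k+1}/q_k - λ)/(1 - λ) > μ̄`.
-/

theorem exists_succ_lt_le_of_eventually_lt {α : Type*} [LinearOrder α] {f : ℕ → α} {x : α}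
    (h₁ : x ≤ f 1) (hlt : ∀ᶠ k in atTop, f k < x) :
    ∃ k, 1 ≤ k ∧ f (k + 1) < x ∧ x ≤ f k := by
  by_contra! hno
  have hle : ∀ k, 1 ≤ k → x ≤ f k :=
    Nat.le_induction h₁ fun k hk hxk => not_lt.1 fun h => (hno k hk h).not_ge hxk
  obtain ⟨k, hk⟩ := (hlt.and (eventually_ge_atTop 1)).exists
  exact (hle k hk.2).not_gt hk.1

theorem neg_mul_mem_Icc {lam b x : ℝ} (hlam : lam ∈ Ioo (-1 : ℝ) 0) (hx : (1 - lam)⁻¹ < x)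
    (hxb : x ≤ b - lam / (1 - lam)) :
    -lam * x ∈ Icc (-lam / (1 - lam)) (b - lam / (1 - lam)) := by
  obtain ⟨hl1, hl0⟩ := hlam
  have hx0 : 0 < x := (inv_pos.2 (by linarith)).trans hx
  constructor
  · rw [div_eq_mul_inv]
    exact mul_le_mul_of_nonneg_left hx.le (by linarith)
  · nlinarith

/-- The discontinuity point `q_k` of the Poincaré map. -/
noncomputable def breakPoint (lam b : ℝ) (k : ℕ) : ℝ :=
  (b - 1) / ((1 - lam) * (b ^ k - 1))

section breakPoint

variable {lam b : ℝ}

theorem breakPoint_one (hb : b ≠ 1) : breakPoint lam b 1 = (1 - lam)⁻¹ := by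
  rw [breakPoint, pow_one, div_mul_cancel_right₀ (sub_ne_zero.2 hb)]

theorem inv_breakPoint_succ (hb : b ≠ 1) (k : ℕ) :
    (breakPoint lam b (k + 1))⁻¹ = b * (breakPoint lam b k)⁻¹ + (1 - lam) := by
  have hb' : b - 1 ≠ 0 := sub_ne_zero.2 hb
  simp only [breakPoint, inv_div]
  field_simp
  ring

theorem breakPoint_pos (hlam : lam < 1) (hb : 1 < b) {k : ℕ} (hk : k ≠ 0) :
    0 < breakPoint lam b k :=
  div_pos (by linarith) (mul_pos (by linarith) (by linarith [one_lt_pow₀ hb hk]))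

theorem breakPoint_le_breakPoint_one (hlam : lam < 1) (hb : 1 < b) {k : ℕ} (hk : k ≠ 0) :
    breakPoint lam b k ≤ breakPoint lam b 1 := by
  refine div_le_div_of_nonneg_left (by linarith) (mul_pos (by linarith) (by simpa using hb)) ?_
  gcongr
  · exact hb.le
  · omega

theorem tendsto_breakPoint_atTop_zero (hlam : lam < 1) (hb : 1 < b) :
    Tendsto (breakPoint lam b) atTop (𝓝 0) := by
  have hden : Tendsto (fun k : ℕ => (b ^ k - 1) * (1 - lam)) atTop atTop :=
    (tendsto_atTop_add_const_right _ (-1) (tendsto_pow_atTop_atTop_of_one_lt hb)).atTop_mul_const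
      (by linarith)
  refine ((tendsto_const_nhds (x := b - 1)).div_atTop hden).congr fun k => ?_
  rw [breakPoint, mul_comm]

theorem slope_mul_breakPoint_succ (hlam : lam < 1) (hb : 1 < b) {k : ℕ} (hk : k ≠ 0) :
    (b - lam * breakPoint lam b k) / breakPoint lam b k * breakPoint lam b (k + 1) =
      (b * breakPoint lam b (k + 1) / breakPoint lam b k - lam) / (1 - lam) := by
  have hrec := inv_breakPoint_succ (lam := lam) hb.ne' k
  have hq := (breakPoint_pos hlam hb hk).ne'
  have hq' := (breakPoint_pos hlam hb k.succ_ne_zero).ne'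
  have hl : 1 - lam ≠ 0 := by linarith
  field_simp at hrec ⊢
  linear_combination lam * hrec

theorem slope_mul_mem_Icc_of_mem_Ioc (hlam : lam ≤ 0) (hb : 1 < b) {k : ℕ} (hk : k ≠ 0) {x : ℝ}
    (hlo : breakPoint lam b (k + 1) < x) (hhi : x ≤ breakPoint lam b k) :
    (b - lam * breakPoint lam b k) / breakPoint lam b k * x ∈
      Icc (-lam / (1 - lam)) (b - lam / (1 - lam)) := by
  have hl1 : lam < 1 := by linarith
  have hq := breakPoint_pos hl1 hb hk
  have hq' := breakPoint_pos hl1 hb k.succ_ne_zero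
  have hslope : 0 ≤ (b - lam * breakPoint lam b k) / breakPoint lam b k :=
    div_nonneg (by nlinarith) hq.le
  constructor
  · calc -lam / (1 - lam)
        ≤ (b * breakPoint lam b (k + 1) / breakPoint lam b k - lam) / (1 - lam) := by
          gcongr
          linarith [div_pos (mul_pos (zero_lt_one.trans hb) hq') hq]
      _ = _ := (slope_mul_breakPoint_succ hl1 hb hk).symm
      _ ≤ _ := mul_le_mul_of_nonneg_left hlo.le hslope
  · calc _ ≤ (b - lam * breakPoint lam b k) / breakPoint lam b k * breakPoint lam b k :=
          mul_le_mul_of_nonneg_left hhi hslope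
      _ = b - lam * breakPoint lam b k := div_mul_cancel₀ _ hq.ne'
      _ ≤ b - lam * breakPoint lam b 1 := by nlinarith [breakPoint_le_breakPoint_one hl1 hb hk]
      _ = b - lam / (1 - lam) := by rw [breakPoint_one hb.ne', div_eq_mul_inv]

end breakPoint

/-- **Lemma 9.** Let `λ ∈ (-1,0)`, `β > 1`,
`q_k = (β-1)/((1-λ)(β^k - 1))`, and let `T` be the piecewise linear map with
`T x = -λx` for `x > q_1` and `T x = ((β - λq_k)/q_k)·x` on `(q_{k+1}, q_k]`, `k ≥ 1`.
Then the segment `[μ̄, ν̄]` with `μ̄ = -λ/(1-λ)`, `ν̄ = β - λ/(1-λ)` is positively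
invariant under `T`. -/
theorem poincareMap_invariant_segment
    (lam b : ℝ) (hlam : lam ∈ Ioo (-1 : ℝ) 0) (hb : 1 < b)
    (q : ℕ → ℝ) (hq : ∀ k : ℕ, q k = (b - 1) / ((1 - lam) * (b ^ k - 1)))
    (T : ℝ → ℝ)
    (hT1 : ∀ x : ℝ, q 1 < x → T x = -lam * x)
    (hTk : ∀ k : ℕ, 1 ≤ k → ∀ x : ℝ, q (k + 1) < x → x ≤ q k →
      T x = ((b - lam * q k) / q k) * x) :
    ∀ x ∈ Icc (-lam / (1 - lam)) (b - lam / (1 - lam)),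
      T x ∈ Icc (-lam / (1 - lam)) (b - lam / (1 - lam)) := by
  obtain rfl : q = breakPoint lam b := funext hq
  have hl0 : lam < 0 := hlam.2
  rintro x ⟨hμx, hxν⟩
  rcases lt_or_ge (breakPoint lam b 1) x with hx1 | hx1
  · rw [hT1 x hx1]
    exact neg_mul_mem_Icc hlam (breakPoint_one hb.ne' ▸ hx1) hxν
  · have hx0 : 0 < x := (div_pos (by linarith) (by linarith)).trans_le hμx
    obtain ⟨k, hk, hlo, hhi⟩ := exists_succ_lt_le_of_eventually_lt hx1
      ((tendsto_breakPoint_atTop_zero (by linarith) hb).eventually (gt_mem_nhds hx0))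
    rw [hTk k hk x hlo hhi]
    exact slope_mul_mem_Icc_of_mem_Ioc hl0.le hb (by omega) hlo hhi
end

section
/- Let λ ∈ (−1,0) and β > 1. For k ≥ 1 set q_k = (β−1)/((1−λ)(β^k − 1)), and define T : (0,∞) → (0,∞) by T(x) = −λx for x > q_1 and T(x) = ((β − λq_k)/q_k) · x for x ∈ (q_{k+1}, q_k], k ≥ 1. Let σ(x) denote the local slope of T at x (σ(x) = −λ for x > q_1, σ(x) = (β − λq_k)/q_k for x ∈ (q_{k+1}, q_k]). Then for Lebesgue-almost every x ∈ (0,∞), the Lyapunov exponent lim_{n→∞} (1/n) Σ_{i=0}^{n−1} ln σ(T^i(x)) exists and equals 0. -/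
open Set MeasureTheory Filter

set_option maxHeartbeats 1000000

/-- **Lemma 10.** Let `λ ∈ (-1,0)`, `β > 1`,
`q_k = (β-1)/((1-λ)(β^k - 1))`, and let `T` be the piecewise linear map with
`T x = -λx` for `x > q_1` and `T x = ((β - λq_k)/q_k)·x` on `(q_{k+1}, q_k]`, `k ≥ 1`;
let `σ` denote the corresponding local slope of `T`. Then for Lebesgue-almost every
`x ∈ (0,∞)` the Lyapunov exponent `lim (1/n) ∑_{i<n} ln σ(T^[i] x)` exists and
equals `0`. -/
theorem poincareMap_lyapunov_exponent_zero
    (lam b : ℝ) (hlam : lam ∈ Ioo (-1 : ℝ) 0) (hb : 1 < b)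
    (q : ℕ → ℝ) (hq : ∀ k : ℕ, q k = (b - 1) / ((1 - lam) * (b ^ k - 1)))
    (T σ : ℝ → ℝ)
    (hT1 : ∀ x : ℝ, q 1 < x → T x = -lam * x)
    (hTk : ∀ k : ℕ, 1 ≤ k → ∀ x : ℝ, q (k + 1) < x → x ≤ q k →
      T x = ((b - lam * q k) / q k) * x)
    (hσ1 : ∀ x : ℝ, q 1 < x → σ x = -lam)
    (hσk : ∀ k : ℕ, 1 ≤ k → ∀ x : ℝ, q (k + 1) < x → x ≤ q k →
      σ x = (b - lam * q k) / q k) :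
    ∀ᵐ x ∂(volume.restrict (Ioi (0 : ℝ))),
      Tendsto (fun n : ℕ => (1 / n : ℝ) * ∑ i ∈ Finset.range n, Real.log (σ (T^[i] x)))
        atTop (nhds 0) := by
  classical
  obtain ⟨hlam1, hlam0⟩ := hlam
  have hL : 0 < -lam := by linarith
  have h1lam : 0 < 1 - lam := by linarith
  have hb1 : 0 < b - 1 := by linarith
  have hb0 : 0 < b := by linarith
  obtain ⟨A, hApos, hqA⟩ : ∃ A : ℝ, 0 < A ∧ ∀ k : ℕ, q k = A / (b ^ k - 1) :=
    ⟨(b - 1) / (1 - lam), div_pos hb1 h1lam, fun k => by rw [hq k, div_div]⟩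
  have hpow : ∀ k : ℕ, 1 ≤ k → b ≤ b ^ k := fun k hk =>
    le_self_pow₀ hb.le (by omega)
  have hbk : ∀ k : ℕ, 1 ≤ k → 0 < b ^ k - 1 := fun k hk => by
    have := hpow k hk; linarith
  have hqpos : ∀ k : ℕ, 1 ≤ k → 0 < q k := fun k hk => by
    rw [hqA]; exact div_pos hApos (hbk k hk)
  have hq1pos : 0 < q 1 := hqpos 1 le_rfl
  have hqle : ∀ k : ℕ, 1 ≤ k → q k ≤ q 1 := by
    intro k hk
    rw [hqA k, hqA 1]
    have h1 : 0 < b ^ 1 - 1 := hbk 1 le_rfl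
    have h2 : b ^ 1 - 1 ≤ b ^ k - 1 := by
      have : b ^ 1 ≤ b ^ k := by simpa using hpow k hk
      linarith
    exact div_le_div_of_nonneg_left hApos.le h1 h2
  obtain ⟨c, hcpos, hcle1, hcle2⟩ :
      ∃ c : ℝ, 0 < c ∧ c ≤ (b - 1) / b ∧ c ≤ (-lam) * q 1 :=
    ⟨min ((b - 1) / b) ((-lam) * q 1),
      lt_min (div_pos hb1 hb0) (mul_pos hL hq1pos), min_le_left _ _, min_le_right _ _⟩
  set C : ℝ := b + (-lam) * q 1 with hC
  -- every x in (0, q 1] lies in some interval (q (k+1), q k]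
  have hmem : ∀ x : ℝ, 0 < x → x ≤ q 1 → ∃ k : ℕ, 1 ≤ k ∧ q (k + 1) < x ∧ x ≤ q k := by
    intro x hx hx1
    have hex : ∃ n : ℕ, q (n + 1) < x := by
      obtain ⟨n, hn⟩ := pow_unbounded_of_one_lt (A / x + 1) hb
      refine ⟨n, ?_⟩
      have hpmono : b ^ n ≤ b ^ (n + 1) :=
        pow_le_pow_right₀ hb.le (Nat.le_succ n)
      have h1 : A / x + 1 < b ^ (n + 1) := lt_of_lt_of_le hn hpmono
      have hAx : 0 < A / x := div_pos hApos hx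
      rw [hqA, div_lt_iff₀ (by linarith)]
      have hcancel : A / x * x = A := div_mul_cancel₀ A hx.ne'
      nlinarith [h1, hx, hcancel]
    set k0 := Nat.find hex with hk0
    have hspec : q (k0 + 1) < x := Nat.find_spec hex
    have hk0pos : 1 ≤ k0 := by
      by_contra h
      have : k0 = 0 := by omega
      rw [this] at hspec
      linarith
    obtain ⟨m, hm⟩ : ∃ m, k0 = m + 1 := ⟨k0 - 1, by omega⟩
    have hmin : ¬ q (m + 1) < x := Nat.find_min hex (by omega)
    refine ⟨k0, hk0pos, hspec, ?_⟩
    rw [hm]; exact le_of_not_gt hmin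
  -- one-step lemma
  have hstep : ∀ x : ℝ, 0 < x → T x = σ x * x ∧ c < T x ∧ T x ≤ max x C := by
    intro x hx
    rcases le_or_gt x (q 1) with hxq | hxq
    · obtain ⟨k, hk, hk1, hk2⟩ := hmem x hx hxq
      have hqk := hqpos k hk
      have hqk1 := hqpos (k + 1) (by omega)
      have hT := hTk k hk x hk1 hk2
      have hσ := hσk k hk x hk1 hk2
      have hbl : b ≤ b - lam * q k := by nlinarith
      have hslope : 0 < (b - lam * q k) / q k := div_pos (by linarith) hqk
      have hratio : (b - 1) * q k ≤ b ^ 2 * q (k + 1) := by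
        rw [hqA k, hqA (k + 1), ← mul_div_assoc, ← mul_div_assoc,
          div_le_div_iff₀ (hbk k hk) (hbk (k + 1) (by omega))]
        have hbk' : b ≤ b ^ k := hpow k hk
        have hsucc : b ^ (k + 1) = b ^ k * b := pow_succ b k
        have key : (b - 1) * (b ^ (k + 1) - 1) ≤ b ^ 2 * (b ^ k - 1) := by
          nlinarith [mul_nonneg hb0.le (sub_nonneg.mpr hbk'), hb1]
        nlinarith [mul_le_mul_of_nonneg_left key hApos.le]
      refine ⟨by rw [hT, hσ], ?_, ?_⟩
      · -- c < T x
        have h3 : b * q (k + 1) < (b - lam * q k) * x := by nlinarith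
        have h4 : (b - 1) / b * q k ≤ b * q (k + 1) := by
          rw [div_mul_eq_mul_div, div_le_iff₀ hb0]
          nlinarith [hratio]
        rw [hT, div_mul_eq_mul_div, lt_div_iff₀ hqk]
        nlinarith [hcle1]
      · -- T x ≤ max x C
        have h5 : (b - lam * q k) / q k * x ≤ (b - lam * q k) / q k * q k :=
          mul_le_mul_of_nonneg_left hk2 hslope.le
        rw [div_mul_cancel₀ _ hqk.ne'] at h5
        have h6 : b - lam * q k ≤ C := by
          have := hqle k hk
          rw [hC]; nlinarith
        rw [hT]
        exact le_trans (le_trans h5 h6) (le_max_right _ _)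
    · have hT := hT1 x hxq
      have hσ := hσ1 x hxq
      refine ⟨by rw [hT, hσ], ?_, ?_⟩
      · rw [hT]
        nlinarith [hcle2]
      · rw [hT]
        have : -lam * x ≤ 1 * x := by nlinarith
        exact le_trans (by linarith) (le_max_left _ _)
  -- pointwise conclusion for every x > 0
  filter_upwards [ae_restrict_mem measurableSet_Ioi] with x hx
  have hxpos : 0 < x := hx
  have horb : ∀ n : ℕ, 0 < T^[n] x ∧ min c x ≤ T^[n] x ∧ T^[n] x ≤ max x C := by
    intro n
    induction n with
    | zero => exact ⟨hxpos, min_le_right _ _, le_max_left _ _⟩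
    | succ n ih =>
      obtain ⟨h0, _, h2⟩ := ih
      obtain ⟨_, hl, hu⟩ := hstep _ h0
      rw [Function.iterate_succ_apply']
      refine ⟨hcpos.trans hl, le_trans (min_le_left _ _) hl.le, ?_⟩
      exact le_trans hu (max_le (le_trans h2 le_rfl) (le_max_right x C))
  have htel : ∀ n : ℕ,
      ∑ i ∈ Finset.range n, Real.log (σ (T^[i] x))
        = Real.log (T^[n] x) - Real.log x := by
    intro n
    have hterm : ∀ i : ℕ, Real.log (σ (T^[i] x))
        = Real.log (T^[i + 1] x) - Real.log (T^[i] x) := by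
      intro i
      obtain ⟨h0, _, _⟩ := horb i
      obtain ⟨he, hl, _⟩ := hstep _ h0
      have hT0 : 0 < T (T^[i] x) := hcpos.trans hl
      have hσeq : σ (T^[i] x) = T (T^[i] x) / (T^[i] x) :=
        (eq_div_iff h0.ne').mpr he.symm
      rw [Function.iterate_succ_apply', hσeq, Real.log_div hT0.ne' h0.ne']
    calc ∑ i ∈ Finset.range n, Real.log (σ (T^[i] x))
        = ∑ i ∈ Finset.range n,
            (Real.log (T^[i + 1] x) - Real.log (T^[i] x)) :=
          Finset.sum_congr rfl fun i _ => hterm i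
      _ = Real.log (T^[n] x) - Real.log (T^[0] x) :=
          Finset.sum_range_sub (fun m => Real.log (T^[m] x)) n
      _ = Real.log (T^[n] x) - Real.log x := by rw [Function.iterate_zero_apply]
  -- boundedness of log of the orbit
  set K : ℝ := |Real.log (min c x)| + |Real.log (max x C)| + |Real.log x| with hK
  have hlogbound : ∀ n : ℕ, |Real.log (T^[n] x) - Real.log x| ≤ K := by
    intro n
    obtain ⟨h0, h1, h2⟩ := horb n
    have hminpos : 0 < min c x := lt_min hcpos hxpos
    have hlb : Real.log (min c x) ≤ Real.log (T^[n] x) := Real.log_le_log hminpos h1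
    have hub : Real.log (T^[n] x) ≤ Real.log (max x C) := Real.log_le_log h0 h2
    refine abs_le.mpr ⟨?_, ?_⟩ <;> rw [hK] <;>
      linarith [le_abs_self (Real.log (max x C)), neg_abs_le (Real.log (min c x)),
        le_abs_self (Real.log x), neg_abs_le (Real.log x),
        abs_nonneg (Real.log (min c x)), abs_nonneg (Real.log (max x C)),
        abs_nonneg (Real.log x)]
  refine squeeze_zero_norm (a := fun n : ℕ => (1 / n : ℝ) * K) ?_ ?_
  · intro n
    have hn : (0 : ℝ) ≤ 1 / n := by positivity
    rw [htel n]
    rw [Real.norm_eq_abs, abs_mul, abs_of_nonneg hn]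
    exact mul_le_mul_of_nonneg_left (hlogbound n) hn
  · have := tendsto_one_div_atTop_nhds_zero_nat.mul_const K
    simpa using this
end
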